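/- arXiv:1704.08213 — 8 statements merged into one kernel-verified Lean document; each statement's English description precedes it below -/
import Mathlib

section
/- Let m ≥ 1 and let α be a norm on the real vector space of all linear maps ℝ^m → ℝ^m. Suppose J̃ maximizes the determinant subject to α(J) = 1, i.e., α(J̃) = 1 and det(J̃) ≥ det(J) for every linear map J : ℝ^m → ℝ^m with α(J) = 1 (such a maximizer exists and satisfies det(J̃) > 0, so J̃ is invertible). Then for every linear map T : ℝ^m → ℝ^m one has trace(J̃⁻¹ ∘ T) ≤ m · α(T). -/
/-!
For `t > 0` the triangle inequality gives `α (J + t • T) ≤ 1 + t * α T`, so homogeneity and the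
maximality of `J` give `det (J + t • T) ≤ (1 + t * α T) ^ m * det J`, with equality at `t = 0`.
Since `det (J + t • T) = det J * det (1 + t • J⁻¹ T)` and `t ↦ det (1 + t • M)` has derivative
`trace M` at `0`, comparing right derivatives at `0` yields `trace (J⁻¹ T) ≤ m * α T`.
-/

open Polynomial Filter Topology

theorem HasDerivAt.le_of_eventually_le_nhdsGT {f g : ℝ → ℝ} {f' g' a : ℝ}
    (hf : HasDerivAt f f' a) (hg : HasDerivAt g g' a) (ha : f a = g a)
    (hle : ∀ᶠ t in 𝓝[>] a, f t ≤ g t) : f' ≤ g' := by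
  have hslope := (hg.sub hf).tendsto_slope_zero_right
  refine sub_nonneg.mp (ge_of_tendsto hslope ?_)
  have hle' : ∀ᶠ t in 𝓝[>] (0 : ℝ), f (a + t) ≤ g (a + t) := by
    rwa [← add_zero a, ← Filter.map_add_left_nhdsGT, eventually_map] at hle
  filter_upwards [hle', self_mem_nhdsWithin] with t ht (htpos : 0 < t)
  simp only [Pi.sub_apply, ha, sub_self, sub_zero, smul_eq_mul]
  exact mul_nonneg (inv_nonneg.mpr htpos.le) (sub_nonneg.mpr ht)

theorem Matrix.hasDerivAt_det_one_add_smul {n : Type*} [Fintype n] [DecidableEq n]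
    (M : Matrix n n ℝ) :
    HasDerivAt (fun t : ℝ ↦ (1 + t • M).det) M.trace 0 := by
  have hp : ∀ t : ℝ, (1 + t • M).det = (det (1 + (X : ℝ[X]) • M.map C)).eval t := by
    intro t
    simp [eval_det, ← smul_eq_mul_diagonal]
  simp_rw [hp, ← derivative_det_one_add_X_smul]
  exact Polynomial.hasDerivAt _ 0

theorem nonneg_of_abs_smul_of_add_le {E : Type*} [AddCommGroup E] [Module ℝ E] {α : E → ℝ}
    (hαs : ∀ (c : ℝ) (x : E), α (c • x) = |c| * α x)
    (hαadd : ∀ x y, α (x + y) ≤ α x + α y) (x : E) : 0 ≤ α x := by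
  have hα0 : α 0 = 0 := by simpa using hαs 0 x
  have h := hαadd x ((-1 : ℝ) • x)
  rw [hαs, neg_one_smul, add_neg_cancel, hα0, abs_neg, abs_one] at h
  linarith

namespace Matrix

variable {n : Type*} [Fintype n] [DecidableEq n]

theorem det_le_pow_mul_det_of_forall_det_le {α : Matrix n n ℝ → ℝ}
    (hα0 : ∀ A, α A = 0 → A = 0) (hαs : ∀ (c : ℝ) (A), α (c • A) = |c| * α A)
    (hαnn : ∀ A, 0 ≤ α A) {J : Matrix n n ℝ} (hJmax : ∀ A, α A = 1 → A.det ≤ J.det)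
    (A : Matrix n n ℝ) : A.det ≤ α A ^ Fintype.card n * J.det := by
  rcases (hαnn A).eq_or_lt with hA | hA
  · refine le_of_eq ?_
    rw [hα0 A hA.symm, ← zero_smul ℝ J, det_smul, hαs, abs_zero, zero_mul]
  · have hunit : α ((α A)⁻¹ • A) = 1 := by
      rw [hαs, abs_of_pos (inv_pos.mpr hA), inv_mul_cancel₀ hA.ne']
    calc A.det = α A ^ Fintype.card n * ((α A)⁻¹ • A).det := by
          rw [det_smul, ← mul_assoc, ← mul_pow, mul_inv_cancel₀ hA.ne', one_pow, one_mul]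
      _ ≤ α A ^ Fintype.card n * J.det := by gcongr; exact hJmax _ hunit

theorem det_add_smul_eq_det_mul_det_one_add_smul {J : Matrix n n ℝ} (hJ : IsUnit J.det)
    (T : Matrix n n ℝ) (t : ℝ) : (J + t • T).det = J.det * (1 + t • (J⁻¹ * T)).det := by
  rw [← det_mul, mul_add, mul_one, Matrix.mul_smul, mul_nonsing_inv_cancel_left J T hJ]

end Matrix

theorem stmt1_general (m : ℕ)
    (α : Matrix (Fin m) (Fin m) ℝ → ℝ)
    (hα0 : ∀ A, α A = 0 ↔ A = 0)
    (hαs : ∀ (c : ℝ) (A), α (c • A) = |c| * α A)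
    (hαadd : ∀ A B, α (A + B) ≤ α A + α B)
    (J : Matrix (Fin m) (Fin m) ℝ)
    (hJ1 : α J = 1)
    (hJmax : ∀ A : Matrix (Fin m) (Fin m) ℝ, α A = 1 → A.det ≤ J.det)
    (hJdet : 0 < J.det)
    (T : Matrix (Fin m) (Fin m) ℝ) :
    Matrix.trace (J⁻¹ * T) ≤ (m : ℝ) * α T := by
  have hαnn := nonneg_of_abs_smul_of_add_le hαs hαadd
  have hdet := Matrix.det_le_pow_mul_det_of_forall_det_le (fun A ↦ (hα0 A).mp) hαs hαnn hJmax
  rw [Fintype.card_fin] at hdet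
  have hpow : HasDerivAt (fun t : ℝ ↦ (1 + α T * t) ^ m) (m * α T) 0 := by
    simpa using (((hasDerivAt_id (0 : ℝ)).const_mul (α T)).const_add 1).fun_pow m
  refine (Matrix.hasDerivAt_det_one_add_smul _).le_of_eventually_le_nhdsGT hpow (by simp) ?_
  filter_upwards [self_mem_nhdsWithin] with t (ht : 0 < t)
  have hnorm : α (J + t • T) ≤ 1 + α T * t := by
    calc α (J + t • T) ≤ α J + α (t • T) := hαadd _ _
      _ = 1 + α T * t := by rw [hJ1, hαs, abs_of_pos ht, mul_comm]
  refine le_of_mul_le_mul_left ?_ hJdet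
  calc J.det * (1 + t • (J⁻¹ * T)).det = (J + t • T).det :=
        (Matrix.det_add_smul_eq_det_mul_det_one_add_smul hJdet.ne'.isUnit T t).symm
    _ ≤ α (J + t • T) ^ m * J.det := hdet _
    _ ≤ J.det * (1 + α T * t) ^ m := by
        rw [mul_comm]; gcongr; exact hαnn _

theorem stmt1 (m : ℕ) (hm : 1 ≤ m)
    (α : Matrix (Fin m) (Fin m) ℝ → ℝ)
    (hα0 : ∀ A, α A = 0 ↔ A = 0)
    (hαs : ∀ (c : ℝ) (A), α (c • A) = |c| * α A)
    (hαadd : ∀ A B, α (A + B) ≤ α A + α B)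
    (J : Matrix (Fin m) (Fin m) ℝ)
    (hJ1 : α J = 1)
    (hJmax : ∀ A : Matrix (Fin m) (Fin m) ℝ, α A = 1 → A.det ≤ J.det)
    (hJdet : 0 < J.det)
    (T : Matrix (Fin m) (Fin m) ℝ) :
    Matrix.trace (J⁻¹ * T) ≤ (m : ℝ) * α T :=
  stmt1_general m α hα0 hαs hαadd J hJ1 hJmax hJdet T
end

section
/- Let m ≥ 1 and let ‖·‖_F be any norm on ℝ^m. Let X be a standard Gaussian vector in ℝ^m. Then there exists a linear map J : ℝ^m → ℝ^m with 𝔼‖J X‖_F = 1 such that for every linear projection P : ℝ^m → ℝ^m (i.e., P ∘ P = P) one has 𝔼‖J P X‖_F ≥ rank(P)/m. -/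
/-!
Let `α(A) = 𝔼‖A X‖_F`; it is a norm on `m × m` matrices. Choose `J` of maximal `|det J|` on the
compact unit ball of `α`, so that `|det A| ≤ α(A)^m |det J|` for every `A`. Comparing
`det (J + t B) = det J · det (1 + t J⁻¹ B)` with `α(J + t B)^m ≤ (1 + t α(B))^m` to first order at
`t = 0⁺` gives `tr (J⁻¹ B) ≤ m α(B)`. For `B = J P` with `P` a projection the left side is
`tr P = rank P`.
-/

open MeasureTheory ProbabilityTheory Filter Topology
open scoped Matrix

/-- The distribution of a standard Gaussian vector in `ℝ^m`. -/
noncomputable def stdGaussian (m : ℕ) : Measure (Fin m → ℝ) :=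
  Measure.pi fun _ => gaussianReal 0 1

theorem le_of_hasDerivAt_of_le_of_eq {f g : ℝ → ℝ} {f' g' a : ℝ} (hf : HasDerivAt f f' a)
    (hg : HasDerivAt g g' a) (ha : f a = g a) (hle : ∀ t > a, f t ≤ g t) : f' ≤ g' := by
  have hslope := hasDerivAt_iff_tendsto_slope.mp (hg.sub hf)
  rw [← sub_nonneg]
  have hright : 𝓝[>] a ≤ 𝓝[≠] a := nhdsWithin_mono a fun t ht => ne_of_gt ht
  refine ge_of_tendsto (hslope.mono_left hright) ?_
  filter_upwards [self_mem_nhdsWithin] with t (ht : a < t)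
  rw [slope_def_field]
  simp only [Pi.sub_apply, ha, sub_self, sub_zero]
  exact div_nonneg (sub_nonneg.mpr (hle t ht)) (sub_nonneg.mpr ht.le)

namespace Seminorm

section FiniteDimensional

variable {E : Type*} [NormedAddCommGroup E] [NormedSpace ℝ E] [FiniteDimensional ℝ E]

protected theorem continuous_of_finiteDimensional (p : Seminorm ℝ E) : Continuous p :=
  p.convexOn.locallyLipschitz.continuous

theorem exists_pos_mul_norm_le (p : Seminorm ℝ E) (hp : ∀ x, p x = 0 → x = 0) :
    ∃ c > 0, ∀ x, c * ‖x‖ ≤ p x := by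
  cases subsingleton_or_nontrivial E
  · exact ⟨1, one_pos, fun x => by simp [Subsingleton.elim x 0]⟩
  obtain ⟨x₀, hx₀, hmin⟩ := (isCompact_sphere (0 : E) 1).exists_isMinOn
    (NormedSpace.sphere_nonempty.mpr zero_le_one) p.continuous_of_finiteDimensional.continuousOn
  have hx₀ : ‖x₀‖ = 1 := by simpa using hx₀
  refine ⟨p x₀, (apply_nonneg p x₀).lt_of_ne' fun h => by simp [hp x₀ h] at hx₀, fun x => ?_⟩
  rcases eq_or_ne x 0 with rfl | hx
  · simp
  have hxs : ‖x‖⁻¹ • x ∈ Metric.sphere (0 : E) 1 := by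
    simp [norm_smul, norm_ne_zero_iff.mpr hx]
  have h := hmin hxs
  rw [Set.mem_ofPred_eq, map_smul_eq_mul, norm_inv, norm_norm] at h
  rwa [le_inv_mul_iff₀ (norm_pos_iff.mpr hx), mul_comm] at h

theorem isCompact_closedBall_of_finiteDimensional (p : Seminorm ℝ E) (hp : ∀ x, p x = 0 → x = 0)
    (r : ℝ) : IsCompact (p.closedBall 0 r) := by
  obtain ⟨c, hc, hpc⟩ := p.exists_pos_mul_norm_le hp
  refine (isCompact_closedBall (0 : E) (r / c)).of_isClosed_subset ?_ fun x hx => ?_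
  · rw [closedBall_zero_eq]
    exact isClosed_le p.continuous_of_finiteDimensional continuous_const
  · rw [mem_closedBall_zero] at hx
    rw [mem_closedBall_zero_iff, le_div_iff₀' hc]
    exact (hpc x).trans hx

end FiniteDimensional

section IntegralMulVec

variable {ι κ : Type*} [Fintype κ] [MeasurableSpace (κ → ℝ)] [BorelSpace (κ → ℝ)]
  {μ : Measure (κ → ℝ)}

theorem integrable_comp_mulVec (p : Seminorm ℝ (ι → ℝ)) (hμ : Integrable id μ)
    (A : Matrix ι κ ℝ) : Integrable (fun x => p (A *ᵥ x)) μ := by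
  let q := p.comp (Matrix.mulVecLin A)
  obtain ⟨C, -, hC⟩ := q.bound_of_continuous_normedSpace q.continuous_of_finiteDimensional
  refine (hμ.norm.const_mul C).mono' q.continuous_of_finiteDimensional.aestronglyMeasurable
    (ae_of_all _ fun x => ?_)
  rw [Real.norm_of_nonneg (apply_nonneg _ _)]
  exact hC x

noncomputable def integralMulVec (p : Seminorm ℝ (ι → ℝ)) (μ : Measure (κ → ℝ))
    (hμ : Integrable id μ) : Seminorm ℝ (Matrix ι κ ℝ) :=
  Seminorm.of (fun A => ∫ x, p (A *ᵥ x) ∂μ)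
    (fun A B => by
      rw [← integral_add (p.integrable_comp_mulVec hμ A) (p.integrable_comp_mulVec hμ B)]
      refine integral_mono (p.integrable_comp_mulVec hμ _)
        ((p.integrable_comp_mulVec hμ A).add (p.integrable_comp_mulVec hμ B)) fun x => ?_
      simpa only [Matrix.add_mulVec] using map_add_le_add p (A *ᵥ x) (B *ᵥ x))
    (fun c A => by
      simp_rw [Matrix.smul_mulVec, map_smul_eq_mul]
      exact integral_const_mul _ _)

theorem eq_zero_of_integralMulVec_eq_zero [μ.IsOpenPosMeasure] (p : Seminorm ℝ (ι → ℝ))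
    (hp : ∀ x, p x = 0 → x = 0) (hμ : Integrable id μ) {A : Matrix ι κ ℝ}
    (hA : p.integralMulVec μ hμ A = 0) : A = 0 := by
  have hcont : Continuous fun x => p (A *ᵥ x) :=
    (p.comp (Matrix.mulVecLin A)).continuous_of_finiteDimensional
  have hae := (integral_eq_zero_iff_of_nonneg (fun x => apply_nonneg p _)
    (p.integrable_comp_mulVec hμ A)).mp hA
  have hzero := (hcont.ae_eq_iff_eq μ continuous_const).mp hae
  exact Matrix.ext_iff_mulVec.mpr fun v => by
    rw [Matrix.zero_mulVec]
    exact hp _ (congrFun hzero v)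

end IntegralMulVec

end Seminorm

namespace Matrix

variable {n : Type*} [Fintype n] [DecidableEq n]

open Polynomial in
theorem hasDerivAt_det_one_add_smul_s2 (S : Matrix n n ℝ) :
    HasDerivAt (fun t : ℝ => (1 + t • S).det) S.trace 0 := by
  have h := (det (1 + (X : ℝ[X]) • S.map C)).hasDerivAt 0
  rw [derivative_det_one_add_X_smul] at h
  refine h.congr_of_eventuallyEq (Eventually.of_forall fun t => ?_)
  dsimp only
  rw [eval_det]
  congr 1
  ext i j
  simp [one_apply, mul_comm]

theorem trace_inv_mul_le_of_abs_det_le (α : Seminorm ℝ (Matrix n n ℝ)) {J : Matrix n n ℝ}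
    (hJ : IsUnit J.det) (hαJ : α J ≤ 1)
    (hmax : ∀ A : Matrix n n ℝ, |A.det| ≤ α A ^ Fintype.card n * |J.det|) (B : Matrix n n ℝ) :
    (J⁻¹ * B).trace ≤ Fintype.card n * α B := by
  set S := J⁻¹ * B
  have hJB : ∀ t : ℝ, J + t • B = J * (1 + t • S) := fun t => by
    rw [Matrix.mul_add, Matrix.mul_one, Matrix.mul_smul, ← Matrix.mul_assoc,
      mul_nonsing_inv _ hJ, Matrix.one_mul]
  have hpow : HasDerivAt (fun t : ℝ => (1 + t * α B) ^ Fintype.card n)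
      (Fintype.card n * α B) 0 := by
    simpa using (((hasDerivAt_id (0 : ℝ)).mul_const (α B)).const_add 1).fun_pow (Fintype.card n)
  refine le_of_hasDerivAt_of_le_of_eq (hasDerivAt_det_one_add_smul_s2 S) hpow (by simp)
    fun t ht => ?_
  have hαJB : α (J + t • B) ≤ 1 + t * α B := by
    calc α (J + t • B) ≤ α J + α (t • B) := map_add_le_add α J (t • B)
      _ ≤ 1 + t * α B := by
        rw [map_smul_eq_mul, Real.norm_of_nonneg ht.le]
        linarith
  have h : |J.det| * |(1 + t • S).det| ≤ |J.det| * (1 + t * α B) ^ Fintype.card n := by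
    calc |J.det| * |(1 + t • S).det| = |(J + t • B).det| := by rw [hJB, det_mul, abs_mul]
      _ ≤ α (J + t • B) ^ Fintype.card n * |J.det| := hmax _
      _ ≤ |J.det| * (1 + t * α B) ^ Fintype.card n := by
        rw [mul_comm]
        gcongr
  exact (le_abs_self _).trans (le_of_mul_le_mul_left h (abs_pos.mpr hJ.ne_zero))

section

attribute [local instance] Matrix.normedAddCommGroup Matrix.normedSpace

theorem exists_abs_det_le_pow_mul [Nonempty n] (α : Seminorm ℝ (Matrix n n ℝ))
    (hα : ∀ A, α A = 0 → A = 0) :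
    ∃ J : Matrix n n ℝ, α J = 1 ∧ IsUnit J.det ∧
      ∀ A : Matrix n n ℝ, |A.det| ≤ α A ^ Fintype.card n * |J.det| := by
  obtain ⟨J, hJ, hmax⟩ := (α.isCompact_closedBall_of_finiteDimensional hα 1).exists_isMaxOn
    (f := fun A => |A.det|) ⟨0, by simp⟩ continuous_id.matrix_det.abs.continuousOn
  have hdet_le : ∀ A : Matrix n n ℝ, |A.det| ≤ α A ^ Fintype.card n * |J.det| := by
    intro A
    rcases (apply_nonneg α A).eq_or_lt' with h | hpos
    · simp [hα A h]
    have h : |((α A)⁻¹ • A).det| ≤ |J.det| := hmax (a := (α A)⁻¹ • A) (by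
      rw [Seminorm.mem_closedBall_zero, map_smul_eq_mul, norm_inv, Real.norm_of_nonneg hpos.le,
        inv_mul_cancel₀ hpos.ne'])
    rwa [det_smul, abs_mul, abs_pow, abs_inv, abs_of_pos hpos, inv_pow,
      inv_mul_le_iff₀ (pow_pos hpos _)] at h
  have hdet : J.det ≠ 0 := fun h => absurd (hdet_le 1) (by simp [h])
  have hαJ : 1 ≤ α J := by
    have h := hdet_le J
    rwa [le_mul_iff_one_le_left (abs_pos.mpr hdet),
      one_le_pow_iff_of_nonneg (apply_nonneg α J) Fintype.card_ne_zero] at h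
  exact ⟨J, le_antisymm (α.mem_closedBall_zero.mp hJ) hαJ, isUnit_iff_ne_zero.mpr hdet, hdet_le⟩

end

end Matrix

instance (m : ℕ) : IsProbabilityMeasure (stdGaussian m) := by
  unfold _root_.stdGaussian
  infer_instance

instance (m : ℕ) : (stdGaussian m).IsOpenPosMeasure := by
  have := (gaussianReal_absolutelyContinuous' 0 one_ne_zero).isOpenPosMeasure
  unfold _root_.stdGaussian
  infer_instance

theorem integrable_id_stdGaussian (m : ℕ) : Integrable id (stdGaussian m) :=
  integrable_pi_iff.mpr fun i =>
    (measurePreserving_eval _ i).integrable_comp_of_integrable IsGaussian.integrable_id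

theorem stmt2 (m : ℕ) (hm : 1 ≤ m)
    (nF : (Fin m → ℝ) → ℝ)
    (hn0 : ∀ x, nF x = 0 ↔ x = 0)
    (hns : ∀ (c : ℝ) (x), nF (c • x) = |c| * nF x)
    (hna : ∀ x y, nF (x + y) ≤ nF x + nF y) :
    ∃ J : (Fin m → ℝ) →ₗ[ℝ] (Fin m → ℝ),
      (∫ x, nF (J x) ∂stdGaussian m) = 1 ∧
      ∀ P : (Fin m → ℝ) →ₗ[ℝ] (Fin m → ℝ), P ∘ₗ P = P →
        (Module.finrank ℝ (LinearMap.range P) : ℝ) / m ≤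
          ∫ x, nF (J (P x)) ∂stdGaussian m := by
  have : Nonempty (Fin m) := ⟨⟨0, hm⟩⟩
  let p : Seminorm ℝ (Fin m → ℝ) := Seminorm.of nF hna fun c x => by rw [hns, Real.norm_eq_abs]
  let α := p.integralMulVec (stdGaussian m) (integrable_id_stdGaussian m)
  obtain ⟨J, hαJ, hJ, hmax⟩ := Matrix.exists_abs_det_le_pow_mul α fun A =>
    p.eq_zero_of_integralMulVec_eq_zero (fun x => (hn0 x).mp) _
  have hα : ∀ A, α A = ∫ x, nF (A *ᵥ x) ∂stdGaussian m := fun A => rfl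
  refine ⟨Matrix.toLin' J, by simpa [hα] using hαJ, fun P hP => ?_⟩
  have hrank : (LinearMap.toMatrix' P).trace = Module.finrank ℝ (LinearMap.range P) := by
    rw [← Matrix.trace_toLin'_eq, Matrix.toLin'_toMatrix']
    exact ((LinearMap.isProj_range_iff_isIdempotentElem P).mpr hP).trace
  have htr := Matrix.trace_inv_mul_le_of_abs_det_le α hJ hαJ.le hmax (J * LinearMap.toMatrix' P)
  rw [← Matrix.mul_assoc, Matrix.nonsing_inv_mul _ hJ, Matrix.one_mul, hrank,
    Fintype.card_fin] at htr
  have hαJP : α (J * LinearMap.toMatrix' P) = ∫ x, nF (Matrix.toLin' J (P x)) ∂stdGaussian m := by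
    simp [hα, ← Matrix.mulVec_mulVec]
  rwa [div_le_iff₀' (by exact_mod_cast hm), ← hαJP]
end

section
/- Let 1 ≤ p < ∞ and d ∈ ℕ, set r = ⌈2 d^{1−1/p}⌉ and s = ⌊d/r⌋, and let V_p^d be the linear space of all functions on [0,1]^d of the form f(x) = Σ_{i ∈ {0,1}^s} a_i · (x₁+⋯+x_r)^{i₁} (x_{r+1}+⋯+x_{2r})^{i₂} ⋯ (x_{r(s−1)+1}+⋯+x_{rs})^{i_s} with real coefficients a_i. Then for every f ∈ V_p^d and every v ∈ ℝ^d the directional derivative satisfies sup_{x ∈ [0,1]^d} |(∇_v f)(x)| ≤ |v|_p · sup_{x ∈ [0,1]^d} |f(x)|. Consequently, for every f ∈ V_p^d, every k ∈ ℕ and all v₁,…,v_k ∈ ℝ^d, sup_{x ∈ [0,1]^d} |(∇_{v_k} ⋯ ∇_{v₁} f)(x)| ≤ |v₁|_p ⋯ |v_k|_p · sup_{x ∈ [0,1]^d} |f(x)|. -/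
/-- The directional derivative `∇_v f` of `f : ℝ^d → ℝ` along `v`. -/
noncomputable def dirDeriv (d : ℕ) (v : Fin d → ℝ) (f : (Fin d → ℝ) → ℝ) :
    (Fin d → ℝ) → ℝ :=
  fun x => fderiv ℝ f x v

/-- The iterated directional derivative `∇_{v_k} ⋯ ∇_{v_1} f`. -/
noncomputable def iterDirDeriv (d : ℕ) : (k : ℕ) → (Fin k → Fin d → ℝ) →
    ((Fin d → ℝ) → ℝ) → ((Fin d → ℝ) → ℝ)
  | 0, _, f => f
  | k + 1, v, f => dirDeriv d (v (Fin.last k)) (iterDirDeriv d k (fun j => v j.castSucc) f)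

lemma block_lt {d r s : ℕ} (hs : s = d / r) (j : Fin s) (t : Fin r) :
    (j : ℕ) * r + (t : ℕ) < d := by
  have hj : (j : ℕ) < d / r := hs ▸ j.isLt
  have key : (j : ℕ) * r + (t : ℕ) < ((j : ℕ) + 1) * r := by
    have := t.isLt
    nlinarith
  have h1 : ((j : ℕ) + 1) * r ≤ d / r * r := Nat.mul_le_mul_right r hj
  have h2 : d / r * r ≤ d := Nat.div_mul_le_self d r
  omega

/-!
On the unit cube each block sum `σ_j(x) = x_{jr} + ⋯ + x_{jr+r-1}` ranges over `[0, r]`, and `f`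
is affine in each `σ_j`. So `∂f/∂σ_j` equals `(f|_{σ_j = r} - f|_{σ_j = 0}) / r`, which is at most
`2 sup |f| / r` in absolute value, and `∇_v f = ∑_j σ_j(v) ∂f/∂σ_j`. By Hölder,
`∑_j |σ_j(v)| ≤ d^{1-1/p} |v|_p`, and `r ≥ 2 d^{1-1/p}` gives the first bound. Partial
differences of multiaffine functions are again multiaffine, so the bound iterates.
-/

open Finset Function

section Multiaffine

def partialDiff {ι : Type*} [DecidableEq ι] (j : ι) :
    ((ι → ℝ) → ℝ) →ₗ[ℝ] ((ι → ℝ) → ℝ) where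
  toFun g y := g (update y j 1) - g (update y j 0)
  map_add' g h := by ext y; simp only [Pi.add_apply]; ring
  map_smul' c g := by ext y; simp only [Pi.smul_apply, smul_eq_mul, RingHom.id_apply]; ring

lemma partialDiff_apply {ι : Type*} [DecidableEq ι] (j : ι) (g : (ι → ℝ) → ℝ) (y : ι → ℝ) :
    partialDiff j g y = g (update y j 1) - g (update y j 0) := rfl

variable {ι : Type*} [Fintype ι]

def multiaffineMonomial (i : ι → Fin 2) (y : ι → ℝ) : ℝ :=
  ∏ j, y j ^ (i j : ℕ)

variable (ι) in
def multiaffinePolys : Submodule ℝ ((ι → ℝ) → ℝ) :=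
  Submodule.span ℝ (Set.range multiaffineMonomial)

lemma differentiable_of_mem_multiaffinePolys {g : (ι → ℝ) → ℝ} (hg : g ∈ multiaffinePolys ι) :
    Differentiable ℝ g := by
  induction hg using Submodule.span_induction with
  | mem _ h =>
    obtain ⟨i, rfl⟩ := h
    unfold multiaffineMonomial
    fun_prop
  | zero => exact differentiable_const 0
  | add _ _ _ _ hg hh => exact hg.add hh
  | smul a _ _ hg => exact hg.const_smul a

lemma continuous_of_mem_multiaffinePolys {g : (ι → ℝ) → ℝ} (hg : g ∈ multiaffinePolys ι) :
    Continuous g :=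
  (differentiable_of_mem_multiaffinePolys hg).continuous

variable [DecidableEq ι]

lemma multiaffineMonomial_update (i : ι → Fin 2) (y : ι → ℝ) (j : ι) (c : ℝ) :
    multiaffineMonomial i (update y j c) =
      c ^ (i j : ℕ) * multiaffineMonomial (update i j 0) y := by
  simp only [multiaffineMonomial, ← mul_prod_erase univ _ (mem_univ j), update_self,
    Fin.val_zero, pow_zero, one_mul]
  congr 1
  refine prod_congr rfl fun j' hj' => ?_
  rw [update_of_ne (ne_of_mem_erase hj'), update_of_ne (ne_of_mem_erase hj')]

lemma partialDiff_mem_multiaffinePolys {g : (ι → ℝ) → ℝ} (hg : g ∈ multiaffinePolys ι) (j : ι) :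
    partialDiff j g ∈ multiaffinePolys ι := by
  suffices multiaffinePolys ι ≤ (multiaffinePolys ι).comap (partialDiff j) from this hg
  refine Submodule.span_le.mpr ?_
  rintro _ ⟨i, rfl⟩
  have : partialDiff j (multiaffineMonomial i) =
      (1 - 0 ^ (i j : ℕ) : ℝ) • multiaffineMonomial (update i j 0) := by
    ext y
    simp only [partialDiff_apply, multiaffineMonomial_update, Pi.smul_apply, smul_eq_mul, one_pow]
    ring
  rw [SetLike.mem_coe, Submodule.mem_comap, this]
  exact Submodule.smul_mem _ _ (Submodule.subset_span (Set.mem_range_self (update i j 0)))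

lemma apply_update_eq_add_mul_partialDiff {g : (ι → ℝ) → ℝ} (hg : g ∈ multiaffinePolys ι)
    (y : ι → ℝ) (j : ι) (c : ℝ) :
    g (update y j c) = g (update y j 0) + c * partialDiff j g y := by
  induction hg using Submodule.span_induction generalizing y with
  | mem _ h =>
    obtain ⟨i, rfl⟩ := h
    simp only [partialDiff_apply, multiaffineMonomial_update]
    rcases (by omega : i j = 0 ∨ i j = 1) with h | h <;> simp [h]
  | zero => simp [partialDiff_apply]
  | add g h _ _ hg hh =>
    simp only [Pi.add_apply, map_add, hg, hh]; ring
  | smul a g _ hg =>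
    simp only [Pi.smul_apply, map_smul, smul_eq_mul, hg]; ring

lemma fderiv_apply_eq_sum_partialDiff {g : (ι → ℝ) → ℝ} (hg : g ∈ multiaffinePolys ι)
    (y w : ι → ℝ) :
    fderiv ℝ g y w = ∑ j, w j * partialDiff j g y := by
  have hline (j : ι) : fderiv ℝ g y (Pi.single j 1) = partialDiff j g y := by
    have hcomp : HasDerivAt (g ∘ update y j) (fderiv ℝ g y (Pi.single j 1)) (y j) := by
      have := (differentiable_of_mem_multiaffinePolys hg _).hasFDerivAt.comp_hasDerivAt (y j)
        (hasDerivAt_update y j (y j))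
      rwa [update_eq_self] at this
    have haffine : HasDerivAt (g ∘ update y j) (partialDiff j g y) (y j) := by
      have : g ∘ update y j = fun c => g (update y j 0) + c * partialDiff j g y :=
        funext fun c => apply_update_eq_add_mul_partialDiff hg y j c
      rw [this]
      simpa using ((hasDerivAt_id (y j)).mul_const (partialDiff j g y)).const_add (g (update y j 0))
    exact hcomp.unique haffine
  conv_lhs => rw [← univ_sum_single w]
  refine (map_sum _ _ _).trans (sum_congr rfl fun j _ => ?_)
  rw [← hline, ← smul_eq_mul, ← map_smul, ← Pi.single_smul, smul_eq_mul, mul_one]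

end Multiaffine

section Blocks

variable {ι : Type*} {d r : ℕ}

def blockSum (e : ι × Fin r → Fin d) : (Fin d → ℝ) →L[ℝ] (ι → ℝ) :=
  ContinuousLinearMap.pi fun j => ∑ t, ContinuousLinearMap.proj (e (j, t))

lemma blockSum_apply (e : ι × Fin r → Fin d) (x : Fin d → ℝ) (j : ι) :
    blockSum e x j = ∑ t, x (e (j, t)) := by
  simp [blockSum]

open Classical in
def fillBlock (e : ι × Fin r → Fin d) (x : Fin d → ℝ) (j : ι) (c : ℝ) : Fin d → ℝ :=
  fun m => if ∃ t, e (j, t) = m then c else x m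

lemma blockSum_fillBlock [DecidableEq ι] {e : ι × Fin r → Fin d} (he : Injective e)
    (x : Fin d → ℝ) (j : ι) (c : ℝ) :
    blockSum e (fillBlock e x j c) = update (blockSum e x) j (r * c) := by
  ext j'
  simp only [blockSum_apply, fillBlock]
  rcases eq_or_ne j' j with rfl | hne
  · simp
  · rw [update_of_ne hne, blockSum_apply]
    refine sum_congr rfl fun t _ => ?_
    rw [if_neg]
    rintro ⟨t', ht'⟩
    exact hne (congrArg Prod.fst (he ht')).symm

lemma fillBlock_mem_Icc (e : ι × Fin r → Fin d) {x : Fin d → ℝ} (hx : x ∈ Set.Icc 0 1)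
    (j : ι) {c : ℝ} (hc : c ∈ Set.Icc 0 1) :
    fillBlock e x j c ∈ Set.Icc 0 1 := by
  constructor <;> intro m <;> unfold fillBlock <;> split_ifs
  exacts [hc.1, hx.1 m, hc.2, hx.2 m]

end Blocks

def blockIndex {d r s : ℕ} (hs : s = d / r) (q : Fin s × Fin r) : Fin d :=
  ⟨q.1 * r + q.2, block_lt hs q.1 q.2⟩

lemma blockIndex_injective {d r s : ℕ} (hs : s = d / r) : Injective (blockIndex hs) := by
  have hsr : s * r ≤ d := hs ▸ Nat.div_mul_le_self d r
  have : blockIndex hs = Fin.castLE hsr ∘ finProdFinEquiv := by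
    ext q
    simp [blockIndex]
    ring
  rw [this]
  exact (Fin.castLE_injective hsr).comp finProdFinEquiv.injective

section Supremum

variable {X : Type*} [TopologicalSpace X] {K : Set X} {h : X → ℝ}

lemma abs_le_iSup_abs (hK : IsCompact K) (hh : ContinuousOn h K) {x : X} (hx : x ∈ K) :
    |h x| ≤ ⨆ y : K, |h y| := by
  refine le_ciSup (f := fun y : K => |h y|) ?_ ⟨x, hx⟩
  simpa only [Set.image_eq_range] using hK.bddAbove_image hh.abs

lemma iSup_abs_nonneg (hK : IsCompact K) (hh : ContinuousOn h K) (hKne : K.Nonempty) :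
    0 ≤ ⨆ y : K, |h y| :=
  (abs_nonneg _).trans (abs_le_iSup_abs hK hh hKne.some_mem)

end Supremum

lemma sum_abs_comp_le_of_injective {α β : Type*} [Fintype α] [Fintype β] {e : α → β}
    (he : Injective e) (v : β → ℝ) :
    ∑ a, |v (e a)| ≤ ∑ b, |v b| :=
  calc ∑ a, |v (e a)| = ∑ b ∈ univ.map ⟨e, he⟩, |v b| :=
        (sum_map univ ⟨e, he⟩ fun b => |v b|).symm
    _ ≤ ∑ b, |v b| := sum_le_sum_of_subset_of_nonneg (subset_univ _) fun _ _ _ => abs_nonneg _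

lemma sum_abs_le_card_rpow_mul {β : Type*} [Fintype β] (v : β → ℝ) {p : ℝ} (hp : 1 ≤ p) :
    ∑ b, |v b| ≤ (Fintype.card β : ℝ) ^ (1 - 1 / p) * (∑ b, |v b| ^ p) ^ (1 / p) := by
  have hp0 : 0 < p := zero_lt_one.trans_le hp
  have hpow := Real.rpow_sum_le_const_mul_sum_rpow (s := univ) (f := v) hp
  calc ∑ b, |v b| = ((∑ b, |v b|) ^ p) ^ (1 / p) := by
        rw [← Real.rpow_mul (by positivity), mul_one_div_cancel hp0.ne', Real.rpow_one]
    _ ≤ ((Fintype.card β : ℝ) ^ (p - 1) * ∑ b, |v b| ^ p) ^ (1 / p) := by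
        gcongr
        simpa using hpow
    _ = (Fintype.card β : ℝ) ^ (1 - 1 / p) * (∑ b, |v b| ^ p) ^ (1 / p) := by
        rw [Real.mul_rpow (by positivity) (by positivity), ← Real.rpow_mul (by positivity)]
        congr 2
        field_simp

section BlockPolynomials

variable {ι : Type*} [Fintype ι] [DecidableEq ι] {d r : ℕ}

lemma dirDeriv_comp_continuousLinearMap (S : (Fin d → ℝ) →L[ℝ] (ι → ℝ)) {g : (ι → ℝ) → ℝ}
    (hg : g ∈ multiaffinePolys ι) (v : Fin d → ℝ) :
    dirDeriv d v (g ∘ S) = (∑ j, S v j • partialDiff j g) ∘ S := by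
  ext x
  simp only [dirDeriv, comp_apply, Finset.sum_apply, Pi.smul_apply, smul_eq_mul]
  rw [fderiv_comp x (differentiable_of_mem_multiaffinePolys hg _) S.differentiableAt,
    ContinuousLinearMap.fderiv, ContinuousLinearMap.coe_comp, comp_apply,
    fderiv_apply_eq_sum_partialDiff hg]

lemma sum_smul_partialDiff_mem (w : ι → ℝ) {g : (ι → ℝ) → ℝ} (hg : g ∈ multiaffinePolys ι) :
    ∑ j, w j • partialDiff j g ∈ multiaffinePolys ι :=
  Submodule.sum_mem _ fun j _ => Submodule.smul_mem _ _ (partialDiff_mem_multiaffinePolys hg j)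

lemma mul_abs_partialDiff_le {e : ι × Fin r → Fin d} (he : Injective e) {g : (ι → ℝ) → ℝ}
    (hg : g ∈ multiaffinePolys ι) {x : Fin d → ℝ} (hx : x ∈ Set.Icc 0 1) (j : ι) :
    r * |partialDiff j g (blockSum e x)| ≤
      2 * ⨆ y : Set.Icc (0 : Fin d → ℝ) 1, |(g ∘ blockSum e) y| := by
  have hcont : ContinuousOn (g ∘ blockSum e) (Set.Icc 0 1) :=
    ((continuous_of_mem_multiaffinePolys hg).comp (blockSum e).continuous).continuousOn
  have hfill (c : ℝ) :
      g (update (blockSum e x) j (r * c)) = (g ∘ blockSum e) (fillBlock e x j c) := by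
    rw [comp_apply, blockSum_fillBlock he]
  -- `g` is affine in the `j`-th block sum, which ranges over `[0, r]` on the cube
  have hdiff : r * partialDiff j g (blockSum e x) =
      (g ∘ blockSum e) (fillBlock e x j 1) - (g ∘ blockSum e) (fillBlock e x j 0) := by
    rw [← hfill, ← hfill, mul_one, mul_zero, apply_update_eq_add_mul_partialDiff hg _ j r]
    ring
  have hmem (c : ℝ) (hc : c ∈ Set.Icc 0 1) := abs_le_iSup_abs isCompact_Icc hcont
    (fillBlock_mem_Icc e hx j hc)
  rw [← abs_of_nonneg (Nat.cast_nonneg (α := ℝ) r), ← abs_mul, hdiff]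
  linarith [abs_sub ((g ∘ blockSum e) (fillBlock e x j 1)) ((g ∘ blockSum e) (fillBlock e x j 0)),
    hmem 1 ⟨zero_le_one, le_rfl⟩, hmem 0 ⟨le_rfl, zero_le_one⟩]

lemma mul_abs_dirDeriv_comp_blockSum_le {e : ι × Fin r → Fin d} (he : Injective e)
    {g : (ι → ℝ) → ℝ} (hg : g ∈ multiaffinePolys ι) (v : Fin d → ℝ) {x : Fin d → ℝ}
    (hx : x ∈ Set.Icc 0 1) :
    r * |dirDeriv d v (g ∘ blockSum e) x| ≤
      2 * (∑ q, |v (e q)|) * ⨆ y : Set.Icc (0 : Fin d → ℝ) 1, |(g ∘ blockSum e) y| := by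
  set M := ⨆ y : Set.Icc (0 : Fin d → ℝ) 1, |(g ∘ blockSum e) y|
  rw [dirDeriv_comp_continuousLinearMap _ hg]
  simp only [comp_apply, Finset.sum_apply, Pi.smul_apply, smul_eq_mul]
  calc r * |∑ j, blockSum e v j * partialDiff j g (blockSum e x)|
      ≤ r * ∑ j, |blockSum e v j * partialDiff j g (blockSum e x)| := by
        gcongr
        exact abs_sum_le_sum_abs _ _
    _ = ∑ j, |blockSum e v j| * (r * |partialDiff j g (blockSum e x)|) := by
        rw [mul_sum]
        exact sum_congr rfl fun j _ => by rw [abs_mul]; ring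
    _ ≤ ∑ j, (∑ t, |v (e (j, t))|) * (2 * M) := by
        refine sum_le_sum fun j _ => mul_le_mul ?_ (mul_abs_partialDiff_le he hg hx j)
          (by positivity) (by positivity)
        rw [blockSum_apply]
        exact abs_sum_le_sum_abs _ _
    _ = 2 * (∑ q, |v (e q)|) * M := by
        rw [Fintype.sum_prod_type, ← sum_mul]
        ring

end BlockPolynomials

lemma abs_dirDeriv_comp_blockSum_le {d : ℕ} (hd : 1 ≤ d) {p : ℝ} (hp : 1 ≤ p) {r s : ℕ}
    (hr : r = ⌈(2 : ℝ) * (d : ℝ) ^ (1 - 1 / p)⌉₊) (hs : s = d / r)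
    {g : (Fin s → ℝ) → ℝ} (hg : g ∈ multiaffinePolys (Fin s)) (v : Fin d → ℝ)
    {x : Fin d → ℝ} (hx : x ∈ Set.Icc 0 1) :
    |dirDeriv d v (g ∘ blockSum (blockIndex hs)) x| ≤ (∑ m, |v m| ^ p) ^ (1 / p) *
      ⨆ y : Set.Icc (0 : Fin d → ℝ) 1, |(g ∘ blockSum (blockIndex hs)) y| := by
  set M := ⨆ y : Set.Icc (0 : Fin d → ℝ) 1, |(g ∘ blockSum (blockIndex hs)) y|
  have hM : 0 ≤ M := iSup_abs_nonneg isCompact_Icc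
    ((continuous_of_mem_multiaffinePolys hg).comp (blockSum _).continuous).continuousOn
    ⟨0, le_rfl, zero_le_one⟩
  have hdp : 1 ≤ (d : ℝ) ^ (1 - 1 / p) := Real.one_le_rpow (by exact_mod_cast hd)
    (sub_nonneg.mpr ((div_le_one (zero_lt_one.trans_le hp)).mpr hp))
  have hr' : 2 * (d : ℝ) ^ (1 - 1 / p) ≤ r := hr ▸ Nat.le_ceil _
  have hholder : ∑ q, |v (blockIndex hs q)| ≤ (d : ℝ) ^ (1 - 1 / p) * (∑ m, |v m| ^ p) ^ (1 / p) :=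
    (sum_abs_comp_le_of_injective (blockIndex_injective hs) v).trans
      (by simpa using sum_abs_le_card_rpow_mul v hp)
  refine le_of_mul_le_mul_left ?_ (show (0 : ℝ) < r by linarith)
  calc r * |dirDeriv d v (g ∘ blockSum (blockIndex hs)) x|
      ≤ 2 * (∑ q, |v (blockIndex hs q)|) * M :=
        mul_abs_dirDeriv_comp_blockSum_le (blockIndex_injective hs) hg v hx
    _ ≤ 2 * ((d : ℝ) ^ (1 - 1 / p) * (∑ m, |v m| ^ p) ^ (1 / p)) * M := by gcongr
    _ = (2 * (d : ℝ) ^ (1 - 1 / p)) * ((∑ m, |v m| ^ p) ^ (1 / p) * M) := by ring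
    _ ≤ r * ((∑ m, |v m| ^ p) ^ (1 / p) * M) := by gcongr

section Iteration

variable {d : ℕ} {K : Set (Fin d → ℝ)} {W : Set ((Fin d → ℝ) → ℝ)}

lemma iterDirDeriv_mem (hderiv : ∀ v, ∀ h ∈ W, dirDeriv d v h ∈ W)
    {f : (Fin d → ℝ) → ℝ} (hf : f ∈ W) (k : ℕ) (v : Fin k → Fin d → ℝ) :
    iterDirDeriv d k v f ∈ W := by
  induction k with
  | zero => exact hf
  | succ k ih => exact hderiv _ _ (ih _)

lemma abs_iterDirDeriv_le (hK : IsCompact K) (hKne : K.Nonempty) {N : (Fin d → ℝ) → ℝ}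
    (hN : ∀ v, 0 ≤ N v) (hcont : ∀ h ∈ W, Continuous h)
    (hderiv : ∀ v, ∀ h ∈ W, dirDeriv d v h ∈ W)
    (hbound : ∀ v, ∀ h ∈ W, ∀ x ∈ K, |dirDeriv d v h x| ≤ N v * ⨆ y : K, |h y|)
    {f : (Fin d → ℝ) → ℝ} (hf : f ∈ W) (k : ℕ) (v : Fin k → Fin d → ℝ) :
    ∀ x ∈ K, |iterDirDeriv d k v f x| ≤ (∏ l, N (v l)) * ⨆ y : K, |f y| := by
  have : Nonempty K := hKne.to_subtype
  induction k with
  | zero =>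
    intro x hx
    simpa [iterDirDeriv] using abs_le_iSup_abs hK (hcont f hf).continuousOn hx
  | succ k ih =>
    intro x hx
    have hprev := iterDirDeriv_mem hderiv hf k (fun l => v l.castSucc)
    calc |iterDirDeriv d (k + 1) v f x|
        ≤ N (v (Fin.last k)) *
            ⨆ y : K, |iterDirDeriv d k (fun l => v l.castSucc) f y| :=
          hbound _ _ hprev x hx
      _ ≤ N (v (Fin.last k)) * ((∏ l : Fin k, N (v l.castSucc)) * ⨆ y : K, |f y|) := by
          gcongr
          · exact hN _
          · exact ciSup_le fun y => ih _ y y.2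
      _ = (∏ l, N (v l)) * ⨆ y : K, |f y| := by
          rw [Fin.prod_univ_castSucc]
          ring

end Iteration

theorem stmt6 (d : ℕ) (hd : 1 ≤ d) (p : ℝ) (hp : 1 ≤ p)
    (r s : ℕ)
    (hr : r = ⌈(2 : ℝ) * (d : ℝ) ^ (1 - 1 / p)⌉₊)
    (hs : s = d / r)
    (f : (Fin d → ℝ) → ℝ)
    (hf : ∃ a : (Fin s → Fin 2) → ℝ, ∀ x : Fin d → ℝ,
      f x = ∑ i : Fin s → Fin 2, a i *
        ∏ j : Fin s,
          (∑ t : Fin r, x ⟨(j : ℕ) * r + (t : ℕ), block_lt hs j t⟩) ^ ((i j : ℕ))) :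
    (∀ v : Fin d → ℝ, ∀ x ∈ Set.Icc (0 : Fin d → ℝ) 1,
        |dirDeriv d v f x| ≤ (∑ j, |v j| ^ p) ^ (1 / p) *
          ⨆ y : Set.Icc (0 : Fin d → ℝ) 1, |f y.1|) ∧
    (∀ (k : ℕ) (v : Fin k → Fin d → ℝ), ∀ x ∈ Set.Icc (0 : Fin d → ℝ) 1,
        |iterDirDeriv d k v f x| ≤ (∏ l, (∑ j, |v l j| ^ p) ^ (1 / p)) *
          ⨆ y : Set.Icc (0 : Fin d → ℝ) 1, |f y.1|) := by
  set W : Set ((Fin d → ℝ) → ℝ) :=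
    (· ∘ blockSum (blockIndex hs)) '' multiaffinePolys (Fin s)
  have hfW : f ∈ W := by
    obtain ⟨a, ha⟩ := hf
    refine ⟨∑ i, a i • multiaffineMonomial i, Submodule.sum_mem _ fun i _ =>
      Submodule.smul_mem _ _ (Submodule.subset_span (Set.mem_range_self i)), funext fun x => ?_⟩
    simp [ha, blockSum_apply, blockIndex, multiaffineMonomial]
  have hcont : ∀ h ∈ W, Continuous h := by
    rintro _ ⟨g, hg, rfl⟩
    exact (continuous_of_mem_multiaffinePolys hg).comp (blockSum _).continuous
  have hderiv : ∀ v, ∀ h ∈ W, dirDeriv d v h ∈ W := by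
    rintro v _ ⟨g, hg, rfl⟩
    exact ⟨_, sum_smul_partialDiff_mem _ hg, (dirDeriv_comp_continuousLinearMap _ hg v).symm⟩
  have hbound : ∀ v, ∀ h ∈ W, ∀ x ∈ Set.Icc (0 : Fin d → ℝ) 1,
      |dirDeriv d v h x| ≤ (∑ j, |v j| ^ p) ^ (1 / p) * ⨆ y : Set.Icc (0 : Fin d → ℝ) 1, |h y| := by
    rintro v _ ⟨g, hg, rfl⟩ x hx
    exact abs_dirDeriv_comp_blockSum_le hd hp hr hs hg v hx
  exact ⟨fun v => hbound v f hfW, abs_iterDirDeriv_le isCompact_Icc ⟨0, le_rfl, zero_le_one⟩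
    (fun v => by positivity) hcont hderiv hbound hfW⟩
end

section
/- Let (D, 𝒜, ρ) be a probability space, H a separable real Hilbert space, ι : H → L_∞(ρ) an injective continuous linear map, and let T : H → L₂(ρ) be the composition of ι with the canonical embedding of L_∞(ρ) into L₂(ρ). Assume (ψ_k)_{k∈ℕ} is an orthonormal basis of H such that the elements T ψ_k are pairwise orthogonal in L₂(ρ) and the singular values σ_k := ‖T ψ_k‖_{L₂(ρ)} form a nonincreasing sequence. Then for every n ∈ ℕ, for every (possibly adaptive) information map N : H → ℝⁿ whose k-th coordinate is y_k = L_{k,(y₁,…,y_{k−1})}(f) with each L_{k,(y₁,…,y_{k−1})} a continuous linear functional on H depending on the previously computed values, and for every map φ : ℝⁿ → L_∞(ρ), one has sup_{‖f‖_H ≤ 1} ‖ι f − φ(N f)‖_{L_∞(ρ)} ≥ √( Σ_{k=n+1}^{∞} σ_k² ) (the right-hand side being interpreted as +∞ if the series diverges). -/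
/-!
Let `s` be the worst-case error of the algorithm. Elements `f`, `-f` of the common kernel `K` of
the non-adaptive functionals `L k 0` produce the same information, so `‖ι f‖_∞ ≤ s ‖f‖` on `K`.
The intersection of `K` with the span of `ψ_0, …, ψ_{n+m-1}` has dimension `d ≥ m`. For an
orthonormal basis `e_j` of it the vector `(T e_j (x))_j` has Euclidean norm at most `s` for
almost every `x` (test it against a countable dense set of directions), and integrating gives
`∑ ‖T e_j‖² ≤ s²`. Expanding `e_j` in the `ψ_k`, the left side is `∑ σ_k² p_k` with weights
`0 ≤ p_k ≤ 1` summing to `d`, which, `σ` being nonincreasing, is at least `σ_n² + ⋯ + σ_{n+m-1}²`.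
-/

open MeasureTheory Finset
open scoped RealInnerProductSpace ENNReal

theorem norm_sq_sum_smul_of_pairwise_inner_eq_zero {E ι : Type*} [NormedAddCommGroup E]
    [InnerProductSpace ℝ E] [Fintype ι] {v : ι → E} (hv : Pairwise fun i j => ⟪v i, v j⟫ = 0)
    (c : ι → ℝ) : ‖∑ i, c i • v i‖ ^ 2 = ∑ i, c i ^ 2 * ‖v i‖ ^ 2 := by
  classical
  rw [← real_inner_self_eq_norm_sq, sum_inner]
  refine sum_congr rfl fun i _ => ?_
  rw [inner_sum, sum_eq_single i (fun j _ hji => by rw [inner_smul_left, inner_smul_right,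
    hv hji.symm, mul_zero, mul_zero]) (by simp), real_inner_smul_left, real_inner_smul_right,
    real_inner_self_eq_norm_sq]
  ring

theorem norm_le_of_norm_sub_le_of_norm_neg_sub_le {E : Type*} [SeminormedAddCommGroup E]
    [NormedSpace ℝ E] {a c : E} {s : ℝ} (h₁ : ‖a - c‖ ≤ s) (h₂ : ‖-a - c‖ ≤ s) : ‖a‖ ≤ s := by
  have h : 2 * ‖a‖ ≤ 2 * s := calc
    2 * ‖a‖ = ‖(a - c) - (-a - c)‖ := by
      rw [sub_sub_sub_cancel_right, sub_neg_eq_add, ← two_smul ℝ a, norm_smul, Real.norm_two]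
    _ ≤ ‖a - c‖ + ‖-a - c‖ := norm_sub_le _ _
    _ ≤ 2 * s := by linarith
  linarith

theorem MeasureTheory.Lp.coeFn_finset_sum {α E ι : Type*} [MeasurableSpace α] {μ : Measure α}
    [NormedAddCommGroup E] {p : ℝ≥0∞} (s : Finset ι) (f : ι → Lp E p μ) :
    ⇑(∑ i ∈ s, f i) =ᵐ[μ] ∑ i ∈ s, ⇑(f i) := by
  classical
  induction s using Finset.induction_on with
  | empty => simpa using Lp.coeFn_zero E p μ
  | insert a s ha ih =>
    rw [sum_insert ha]
    filter_upwards [Lp.coeFn_add (f a) (∑ i ∈ s, f i), ih] with x hx hs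
    rw [hx, Pi.add_apply, hs, sum_insert ha, Pi.add_apply]

theorem MeasureTheory.Lp.ae_norm_le_norm_top {α E : Type*} [MeasurableSpace α] {μ : Measure α}
    [NormedAddCommGroup E] (f : Lp E ∞ μ) : ∀ᵐ x ∂μ, ‖f x‖ ≤ ‖f‖ := by
  rw [Lp.norm_def, toReal_eLpNorm (Lp.aestronglyMeasurable f)]
  exact ae_le_lpNorm_exponent_top (Lp.memLp f)

theorem MeasureTheory.L2.norm_sq_eq_integral_sq {α : Type*} [MeasurableSpace α] {μ : Measure α}
    (f : Lp ℝ 2 μ) : ‖f‖ ^ 2 = ∫ x, f x ^ 2 ∂μ := by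
  rw [← real_inner_self_eq_norm_sq, L2.inner_def]
  simp only [real_inner_self_eq_norm_sq, Real.norm_eq_abs, sq_abs]

theorem ae_norm_le_of_forall_ae_inner_le {α E : Type*} [MeasurableSpace α] {μ : Measure α}
    [NormedAddCommGroup E] [InnerProductSpace ℝ E] [TopologicalSpace.SeparableSpace E]
    {G : α → E} {s : ℝ} (hs : 0 ≤ s) (h : ∀ t, ∀ᵐ x ∂μ, ⟪t, G x⟫ ≤ s * ‖t‖) :
    ∀ᵐ x ∂μ, ‖G x‖ ≤ s := by
  obtain ⟨C, hC, hCdense⟩ := TopologicalSpace.exists_countable_dense E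
  filter_upwards [(ae_ball_iff hC).mpr fun t _ => h t] with x hx
  have hclosed : IsClosed {t | ⟪t, G x⟫ ≤ s * ‖t‖} :=
    isClosed_le (by fun_prop) (by fun_prop)
  have hall := hCdense.closure_eq ▸ hclosed.closure_subset_iff.mpr hx
  have hGx : ‖G x‖ * ‖G x‖ ≤ s * ‖G x‖ := by
    rw [← real_inner_self_eq_norm_mul_norm]
    exact hall (Set.mem_univ (G x))
  rcases (norm_nonneg (G x)).eq_or_lt with h0 | hpos
  · rw [← h0]; exact hs
  · exact le_of_mul_le_mul_right hGx hpos

theorem sum_norm_sq_le_of_ae_le {α V ι : Type*} [MeasurableSpace α] {μ : Measure α}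
    [IsFiniteMeasure μ] [NormedAddCommGroup V] [InnerProductSpace ℝ V] [FiniteDimensional ℝ V]
    [Fintype ι] (Ψ : V →ₗ[ℝ] Lp ℝ 2 μ) (e : OrthonormalBasis ι ℝ V) {s : ℝ} (hs : 0 ≤ s)
    (h : ∀ v, ∀ᵐ x ∂μ, Ψ v x ≤ s * ‖v‖) :
    ∑ i, ‖Ψ (e i)‖ ^ 2 ≤ s ^ 2 * μ.real Set.univ := by
  set G : α → V := fun x => ∑ i, Ψ (e i) x • e i
  have hinner : ∀ v, ∀ᵐ x ∂μ, ⟪v, G x⟫ = Ψ v x := by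
    intro v
    have hv : Ψ v = ∑ i, e.repr v i • Ψ (e i) := by
      conv_lhs => rw [← e.sum_repr v]
      simp only [map_sum, map_smul]
    filter_upwards [Lp.coeFn_finset_sum univ (fun i => e.repr v i • Ψ (e i)),
      ae_all_iff.2 fun i => Lp.coeFn_smul (e.repr v i) (Ψ (e i))] with x hsum hsmul
    rw [hv, hsum, Finset.sum_apply, inner_sum]
    refine sum_congr rfl fun i _ => ?_
    rw [hsmul i, real_inner_smul_right, Pi.smul_apply, smul_eq_mul, e.repr_apply_apply,
      real_inner_comm, mul_comm]
  have hG : ∀ᵐ x ∂μ, ‖G x‖ ≤ s := ae_norm_le_of_forall_ae_inner_le hs fun v => by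
    filter_upwards [hinner v, h v] with x hx hle
    rw [hx]; exact hle
  have hGnorm : ∀ x, ‖G x‖ ^ 2 = ∑ i, Ψ (e i) x ^ 2 := fun x => by
    rw [norm_sq_sum_smul_of_pairwise_inner_eq_zero (fun i j hij => e.orthonormal.2 hij)]
    simp [e.orthonormal.1]
  have hint : ∀ i, Integrable (fun x => Ψ (e i) x ^ 2) μ := fun i => (Lp.memLp _).integrable_sq
  calc ∑ i, ‖Ψ (e i)‖ ^ 2 = ∫ x, ‖G x‖ ^ 2 ∂μ := by
        simp only [hGnorm, L2.norm_sq_eq_integral_sq]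
        exact (integral_finsetSum univ fun i _ => hint i).symm
    _ ≤ ∫ _x, s ^ 2 ∂μ :=
        integral_mono_ae (by simpa only [hGnorm] using integrable_finsetSum univ fun i _ => hint i)
          (integrable_const _) (hG.mono fun x hx => pow_le_pow_left₀ (norm_nonneg _) hx 2)
    _ = s ^ 2 * μ.real Set.univ := by rw [integral_const, smul_eq_mul, mul_comm]

theorem sum_ite_le_sum_mul {n m : ℕ} {w : ℕ → ℝ} {p : Fin (n + m) → ℝ} (hw : Antitone w)
    (hw0 : 0 ≤ w n) (hp0 : ∀ k, 0 ≤ p k) (hp1 : ∀ k, p k ≤ 1) (hp : (m : ℝ) ≤ ∑ k, p k) :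
    ∑ k : Fin (n + m), (if n ≤ (k : ℕ) then w k else 0) ≤ ∑ k : Fin (n + m), w k * p k := by
  have hcount : ∑ k : Fin (n + m), (if n ≤ (k : ℕ) then (1 : ℝ) else 0) = m := by
    rw [Fin.sum_univ_eq_sum_range (fun k => if n ≤ k then (1 : ℝ) else 0), sum_range_add]
    simp
  -- for `k < n` use `0 ≤ p k` and `w n ≤ w k`; for `n ≤ k` use `0 ≤ 1 - p k` and `w k ≤ w n`
  have hpoint : ∀ k : Fin (n + m),
      (if n ≤ (k : ℕ) then w k else 0) - w k * p k ≤
        w n * ((if n ≤ (k : ℕ) then 1 else 0) - p k) := by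
    intro k
    split_ifs with hk
    · nlinarith [hw hk, hp1 k]
    · nlinarith [hw (le_of_not_ge hk), hp0 k]
  have := sum_le_sum fun k (_ : k ∈ univ) => hpoint k
  rw [sum_sub_distrib, ← mul_sum, sum_sub_distrib, hcount] at this
  nlinarith

theorem sum_ite_le_sum_sum_sq_mul {d n m : ℕ} {E : Fin d → EuclideanSpace ℝ (Fin (n + m))}
    (hE : Orthonormal ℝ E) (hd : m ≤ d) {w : ℕ → ℝ} (hw : Antitone w) (hw0 : 0 ≤ w n) :
    ∑ k : Fin (n + m), (if n ≤ (k : ℕ) then w k else 0) ≤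
      ∑ j, ∑ k : Fin (n + m), E j k ^ 2 * w k := by
  have hbessel : ∀ k, ∑ j, E j k ^ 2 ≤ 1 := fun k => by
    simpa [EuclideanSpace.inner_single_right, sq_abs] using
      hE.sum_inner_products_le (EuclideanSpace.single k (1 : ℝ)) (s := univ)
  have hparseval : ∑ k, ∑ j, E j k ^ 2 = d := by
    rw [sum_comm]
    simp only [← EuclideanSpace.real_norm_sq_eq, hE.1, one_pow, sum_const, card_univ,
      Fintype.card_fin, nsmul_eq_mul, mul_one]
  calc ∑ k : Fin (n + m), (if n ≤ (k : ℕ) then w k else 0)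
      ≤ ∑ k : Fin (n + m), w k * ∑ j, E j k ^ 2 :=
        sum_ite_le_sum_mul hw hw0 (fun k => sum_nonneg fun j _ => sq_nonneg _) hbessel
          (by rw [hparseval]; exact_mod_cast hd)
    _ = ∑ j, ∑ k : Fin (n + m), E j k ^ 2 * w k := by
        simp only [mul_sum]
        rw [sum_comm]
        simp only [mul_comm]

theorem adaptive_information_eq_zero {α β : Type*} [Zero β] {n : ℕ}
    {L : (k : Fin n) → (Fin k → β) → α → β} {N : α → Fin n → β}
    (hN : ∀ f k, N f k = L k (fun j => N f (Fin.castLE k.isLt.le j)) f) {f : α}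
    (hf : ∀ k, L k 0 f = 0) : N f = 0 := by
  suffices h : ∀ i (hi : i < n), N f ⟨i, hi⟩ = 0 from funext fun k => h k k.isLt
  intro i
  induction i using Nat.strong_induction_on with
  | _ i ih =>
    intro hi
    rw [hN f ⟨i, hi⟩]
    convert hf ⟨i, hi⟩ with j
    exact ih j j.isLt _

theorem norm_le_mul_norm_of_forall_norm_sub_le {H F Y : Type*} [NormedAddCommGroup H]
    [NormedSpace ℝ H] [NormedAddCommGroup F] [NormedSpace ℝ F] [Zero Y] (ι : H →L[ℝ] F)
    (N : H → Y) (φ : Y → F) {K : Submodule ℝ H} (hN : ∀ f ∈ K, N f = 0) {s : ℝ}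
    (herr : ∀ f, ‖f‖ ≤ 1 → ‖ι f - φ (N f)‖ ≤ s) {f : H} (hf : f ∈ K) : ‖ι f‖ ≤ s * ‖f‖ := by
  rcases eq_or_ne f 0 with rfl | hf0
  · simp
  set g := ‖f‖⁻¹ • f
  have hgK : g ∈ K := K.smul_mem _ hf
  have hg : ‖g‖ = 1 := norm_smul_inv_norm hf0
  have hιg : ‖ι g‖ ≤ s := by
    refine norm_le_of_norm_sub_le_of_norm_neg_sub_le (c := φ 0) ?_ ?_
    · simpa [hN g hgK] using herr g hg.le
    · simpa [hN (-g) (K.neg_mem hgK)] using herr (-g) (by rw [norm_neg, hg])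
  rw [map_smul, norm_smul, norm_inv, norm_norm] at hιg
  have hpos : 0 < ‖f‖ := norm_pos_iff.mpr hf0
  rw [inv_mul_le_iff₀ hpos] at hιg
  linarith

theorem sum_ite_sq_norm_le_of_ae_le_on_ker {α H : Type*} [MeasurableSpace α] {μ : Measure α}
    [IsFiniteMeasure μ] [NormedAddCommGroup H] [InnerProductSpace ℝ H] {b : ℕ → H}
    (hb : Orthonormal ℝ b) (T : H →ₗ[ℝ] Lp ℝ 2 μ)
    (horth : Pairwise fun j k => ⟪T (b j), T (b k)⟫ = 0) (hmono : Antitone fun k => ‖T (b k)‖)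
    {n : ℕ} (ℓ : H →ₗ[ℝ] Fin n → ℝ) {s : ℝ} (hs : 0 ≤ s)
    (hbound : ∀ f ∈ LinearMap.ker ℓ, ∀ᵐ x ∂μ, T f x ≤ s * ‖f‖) (m : ℕ) :
    ∑ k ∈ range (n + m), (if n ≤ k then ‖T (b k)‖ ^ 2 else 0) ≤ s ^ 2 * μ.real Set.univ := by
  let Φ : EuclideanSpace ℝ (Fin (n + m)) →ₗ[ℝ] H :=
    Fintype.linearCombination ℝ (fun k : Fin (n + m) => b k) ∘ₗ
      (WithLp.linearEquiv 2 ℝ (Fin (n + m) → ℝ)).toLinearMap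
  have hΦ : ∀ c, Φ c = ∑ k, c k • b k := fun c => by
    simp [Φ, Fintype.linearCombination_apply]
  have hnormΦ : ∀ c, ‖Φ c‖ = ‖c‖ := fun c => by
    rw [← sq_eq_sq₀ (norm_nonneg _) (norm_nonneg _), hΦ,
      norm_sq_sum_smul_of_pairwise_inner_eq_zero fun i j hij => hb.2 (Fin.val_injective.ne hij),
      EuclideanSpace.real_norm_sq_eq]
    simp [hb.1]
  have hTΦ : ∀ c, ‖T (Φ c)‖ ^ 2 = ∑ k : Fin (n + m), c k ^ 2 * ‖T (b k)‖ ^ 2 := fun c => by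
    rw [hΦ, map_sum]
    simp only [map_smul]
    exact norm_sq_sum_smul_of_pairwise_inner_eq_zero
      (fun i j hij => horth (Fin.val_injective.ne hij)) c
  have hdim : m ≤ Module.finrank ℝ (ℓ ∘ₗ Φ).ker := by
    have hrank := LinearMap.finrank_range_add_finrank_ker (ℓ ∘ₗ Φ)
    have hrange := Submodule.finrank_le (LinearMap.range (ℓ ∘ₗ Φ))
    rw [finrank_euclideanSpace_fin] at hrank
    rw [Module.finrank_fin_fun] at hrange
    omega
  let e := stdOrthonormalBasis ℝ (ℓ ∘ₗ Φ).ker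
  have htrace := sum_norm_sq_le_of_ae_le (T ∘ₗ Φ ∘ₗ (ℓ ∘ₗ Φ).ker.subtype) e hs fun v => by
    simpa [hnormΦ] using hbound (Φ v) v.2
  have hweights := sum_ite_le_sum_sum_sq_mul (E := fun j => (e j : EuclideanSpace ℝ (Fin (n + m))))
    (e.orthonormal.comp_linearIsometry (ℓ ∘ₗ Φ).ker.subtypeₗᵢ) hdim
    (fun j k hjk => pow_le_pow_left₀ (norm_nonneg _) (hmono hjk) 2) (sq_nonneg _)
  rw [← Fin.sum_univ_eq_sum_range (fun k => if n ≤ k then ‖T (b k)‖ ^ 2 else 0)]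
  calc _ ≤ _ := hweights
    _ = ∑ j, ‖T (Φ (e j))‖ ^ 2 := by simp only [hTΦ]
    _ ≤ _ := htrace

theorem stmt8_general {D : Type*} [MeasurableSpace D] (ρ : Measure D) [IsProbabilityMeasure ρ]
    {H : Type*} [NormedAddCommGroup H] [InnerProductSpace ℝ H] [CompleteSpace H]
    -- `H` is separable with orthonormal basis `(ψ_k)_{k ∈ ℕ} = b`
    (b : HilbertBasis ℕ ℝ H)
    (ι : H →L[ℝ] Lp ℝ ⊤ ρ)
    -- `T` is the composition of `ι` with the canonical embedding of `L∞(ρ)` into `L₂(ρ)`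
    (T : H →L[ℝ] Lp ℝ 2 ρ)
    (hT : ∀ f : H, ⇑(T f) =ᵐ[ρ] ⇑(ι f))
    (horth : ∀ j k : ℕ, j ≠ k → @inner ℝ _ _ (T (b j)) (T (b k)) = 0)
    (hmono : Antitone fun k => ‖T (b k)‖)
    (n : ℕ)
    -- adaptive deterministic information from continuous linear functionals
    (L : (k : Fin n) → (Fin (k : ℕ) → ℝ) → (H →L[ℝ] ℝ))
    (N : H → Fin n → ℝ)
    (hN : ∀ (f : H) (k : Fin n), N f k = L k (fun j => N f (Fin.castLE k.isLt.le j)) f)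
    (φ : (Fin n → ℝ) → Lp ℝ ⊤ ρ) :
    (∑' k : ℕ, if n ≤ k then ENNReal.ofReal (‖T (b k)‖ ^ 2) else 0) ≤
      (⨆ f : {f : H // ‖f‖ ≤ 1}, ENNReal.ofReal ‖ι f.1 - φ (N f.1)‖) ^ 2 := by
  set S := ⨆ f : {f : H // ‖f‖ ≤ 1}, ENNReal.ofReal ‖ι f.1 - φ (N f.1)‖
  rcases eq_or_ne S ⊤ with hS | hS
  · simp [hS]
  have herr : ∀ f : H, ‖f‖ ≤ 1 → ‖ι f - φ (N f)‖ ≤ S.toReal := fun f hf =>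
    (ENNReal.ofReal_le_iff_le_toReal hS).mp (le_iSup_of_le (⟨f, hf⟩ : {f : H // ‖f‖ ≤ 1}) le_rfl)
  let ℓ : H →ₗ[ℝ] Fin n → ℝ := LinearMap.pi fun k => (L k 0 : H →ₗ[ℝ] ℝ)
  have hbound : ∀ f ∈ LinearMap.ker ℓ, ∀ᵐ x ∂ρ, T f x ≤ S.toReal * ‖f‖ := by
    intro f hf
    have hιf := norm_le_mul_norm_of_forall_norm_sub_le ι N φ
      (fun g hg => adaptive_information_eq_zero (L := fun k y => L k y) hN
        fun k => congrFun (LinearMap.mem_ker.mp hg) k)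
      herr hf
    filter_upwards [hT f, Lp.ae_norm_le_norm_top (ι f)] with x hTx hx
    rw [hTx]
    exact (le_abs_self _).trans (hx.trans hιf)
  have hfin := sum_ite_sq_norm_le_of_ae_le_on_ker b.orthonormal (T : H →ₗ[ℝ] Lp ℝ 2 ρ)
    (fun j k hjk => horth j k hjk) hmono ℓ ENNReal.toReal_nonneg hbound
  refine ENNReal.tsum_le_of_sum_range_le fun M => ?_
  calc ∑ k ∈ range M, (if n ≤ k then ENNReal.ofReal (‖T (b k)‖ ^ 2) else 0)
      ≤ ∑ k ∈ range (n + M), (if n ≤ k then ENNReal.ofReal (‖T (b k)‖ ^ 2) else 0) :=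
        sum_le_sum_of_subset (range_subset_range.mpr (Nat.le_add_left M n))
    _ = ENNReal.ofReal (∑ k ∈ range (n + M), if n ≤ k then ‖T (b k)‖ ^ 2 else 0) := by
        rw [ENNReal.ofReal_sum_of_nonneg fun k _ => by positivity]
        simp only [apply_ite ENNReal.ofReal, ENNReal.ofReal_zero]
    _ ≤ ENNReal.ofReal (S.toReal ^ 2) := ENNReal.ofReal_le_ofReal (by simpa using hfin M)
    _ = S ^ 2 := by rw [ENNReal.ofReal_pow ENNReal.toReal_nonneg, ENNReal.ofReal_toReal hS]

theorem stmt8 {D : Type*} [MeasurableSpace D] (ρ : Measure D) [IsProbabilityMeasure ρ]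
    {H : Type*} [NormedAddCommGroup H] [InnerProductSpace ℝ H] [CompleteSpace H]
    -- `H` is separable with orthonormal basis `(ψ_k)_{k ∈ ℕ} = b`
    (b : HilbertBasis ℕ ℝ H)
    (ι : H →L[ℝ] Lp ℝ ⊤ ρ) (hι : Function.Injective ι)
    -- `T` is the composition of `ι` with the canonical embedding of `L∞(ρ)` into `L₂(ρ)`
    (T : H →L[ℝ] Lp ℝ 2 ρ)
    (hT : ∀ f : H, ⇑(T f) =ᵐ[ρ] ⇑(ι f))
    (horth : ∀ j k : ℕ, j ≠ k → @inner ℝ _ _ (T (b j)) (T (b k)) = 0)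
    (hmono : Antitone fun k => ‖T (b k)‖)
    (n : ℕ) (hn : 1 ≤ n)
    -- adaptive deterministic information from continuous linear functionals
    (L : (k : Fin n) → (Fin (k : ℕ) → ℝ) → (H →L[ℝ] ℝ))
    (N : H → Fin n → ℝ)
    (hN : ∀ (f : H) (k : Fin n), N f k = L k (fun j => N f (Fin.castLE k.isLt.le j)) f)
    (φ : (Fin n → ℝ) → Lp ℝ ⊤ ρ) :
    (∑' k : ℕ, if n ≤ k then ENNReal.ofReal (‖T (b k)‖ ^ 2) else 0) ≤
      (⨆ f : {f : H // ‖f‖ ≤ 1}, ENNReal.ofReal ‖ι f.1 - φ (N f.1)‖) ^ 2 :=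
  stmt8_general ρ b ι T hT horth hmono n L N hN φ
end

section
/- Let d, n ∈ ℕ and let x₁, …, x_n ∈ [0,1]^d. Then there exist monotone functions f₋, f₊ : [0,1]^d → [0,1] with f₋ ≤ f₊ pointwise, f₋(x_i) = f₊(x_i) for all i = 1, …, n, and ∫_{[0,1]^d} (f₊ − f₋) dλ^d ≥ 1 − n · 2^{−d}. Consequently, for every map φ : ℝⁿ → L₁([0,1]^d) there is a monotone function f ∈ {f₋, f₊} with ‖f − φ(f(x₁), …, f(x_n))‖_{L₁([0,1]^d)} ≥ (1/2)(1 − n · 2^{−d}). -/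
/-!
Each sample point `x i` has two corner boxes `[x i, 1]` and `[0, x i]` in the cube, and since
`∏ a_j (1 - a_j) ≤ 4⁻ᵈ` one of them has volume at most `2⁻ᵈ`. Let `U` be the upper set generated by
the points whose upper box is the small one and `V` the lower set generated by the others;
`U ∩ V = ∅` because `y ↦ ∏ y_j` is monotone on the nonnegative orthant. Then `f₋ = 𝟙_U` and
`f₊ = 𝟙_{Vᶜ}` are monotone, agree on `U ∪ V ∋ x i`, and differ by `𝟙_{(U ∪ V)ᶜ}`, while inside the
cube `U ∪ V` is covered by the `n` small boxes. As `f₋` and `f₊` have the same samples, `φ` returns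
the same `g` for both, and by the triangle inequality in `L¹` one of them is far from `g`.
-/

open MeasureTheory Set

lemma prod_le_or_prod_one_sub_le {ι : Type*} [Fintype ι] {a : ι → ℝ} (h₀ : 0 ≤ a) (h₁ : a ≤ 1) :
    ∏ j, a j ≤ (2 ^ Fintype.card ι)⁻¹ ∨ ∏ j, (1 - a j) ≤ (2 ^ Fintype.card ι)⁻¹ := by
  by_contra! h
  have hprod : ∏ j, a j * (1 - a j) ≤ ((2 ^ Fintype.card ι)⁻¹) ^ 2 := by
    calc ∏ j, a j * (1 - a j) ≤ ∏ _j : ι, (4 : ℝ)⁻¹ :=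
          Finset.prod_le_prod (fun j _ => mul_nonneg (h₀ j) (sub_nonneg.2 (h₁ j)))
            fun j _ => by nlinarith [sq_nonneg (a j - 2⁻¹)]
      _ = ((2 ^ Fintype.card ι)⁻¹) ^ 2 := by
          rw [Finset.prod_const, Finset.card_univ, ← inv_pow, ← pow_mul, mul_comm, pow_mul]
          norm_num
  rw [Finset.prod_mul_distrib, sq] at hprod
  exact hprod.not_gt (mul_lt_mul'' h.1 h.2 (by positivity) (by positivity))

section Indicator

variable {α : Type*} {U V : Set α}

lemma indicator_one_mem_Icc (s : Set α) (a : α) : s.indicator (1 : α → ℝ) a ∈ Icc (0 : ℝ) 1 :=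
  ⟨indicator_nonneg (fun _ _ => zero_le_one) a, indicator_le_self' (fun _ _ => zero_le_one) a⟩

lemma IsUpperSet.monotone_indicator_one [Preorder α] (hU : IsUpperSet U) :
    Monotone (U.indicator (1 : α → ℝ)) := by
  intro a b hab
  by_cases ha : a ∈ U
  · simp [ha, hU hab ha]
  · simp only [indicator_of_notMem ha]
    exact indicator_nonneg (fun _ _ => zero_le_one) b

lemma indicator_one_le_indicator_compl (h : Disjoint U V) :
    U.indicator (1 : α → ℝ) ≤ Vᶜ.indicator 1 :=
  indicator_le_indicator_of_subset h.subset_compl_right fun _ => zero_le_one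

lemma indicator_one_eq_indicator_compl_of_mem (h : Disjoint U V) {a : α} (ha : a ∈ U ∪ V) :
    U.indicator (1 : α → ℝ) a = Vᶜ.indicator 1 a := by
  rcases ha with ha | ha
  · simp [ha, h.notMem_of_mem_left ha]
  · simp [ha, h.notMem_of_mem_right ha]

lemma indicator_compl_sub_indicator_of_disjoint (h : Disjoint U V) :
    Vᶜ.indicator (1 : α → ℝ) - U.indicator 1 = (U ∪ V)ᶜ.indicator 1 := by
  ext a
  by_cases ha : a ∈ U ∪ V
  · rw [Pi.sub_apply, indicator_one_eq_indicator_compl_of_mem h ha, sub_self,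
      indicator_of_notMem (not_not_intro ha)]
  · rw [mem_union, not_or] at ha
    simp [ha.1, ha.2]

lemma integral_indicator_compl_sub_indicator [MeasurableSpace α] {μ : Measure α}
    [IsFiniteMeasure μ] (h : Disjoint U V) (hU : MeasurableSet U) (hV : MeasurableSet V) :
    ∫ a, (Vᶜ.indicator (1 : α → ℝ) a - U.indicator 1 a) ∂μ = μ.real univ - μ.real (U ∪ V) := by
  change ∫ a, (Vᶜ.indicator 1 - U.indicator 1 : α → ℝ) a ∂μ = _
  rw [indicator_compl_sub_indicator_of_disjoint h, integral_indicator_one (hU.union hV).compl,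
    measureReal_compl (hU.union hV)]

lemma exists_half_integral_abs_sub_le [MeasurableSpace α] {μ : Measure α} {f₁ f₂ g : α → ℝ}
    (h₁ : Integrable f₁ μ) (h₂ : Integrable f₂ μ) (hg : Integrable g μ) :
    ∃ f, (f = f₁ ∨ f = f₂) ∧ 1 / 2 * ∫ a, |f₂ a - f₁ a| ∂μ ≤ ∫ a, |f a - g a| ∂μ := by
  have htri : ∫ a, |f₂ a - f₁ a| ∂μ ≤ ∫ a, |f₂ a - g a| ∂μ + ∫ a, |f₁ a - g a| ∂μ := by
    have i₁ : Integrable (fun a => |f₁ a - g a|) μ := (h₁.sub hg).abs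
    have i₂ : Integrable (fun a => |f₂ a - g a|) μ := (h₂.sub hg).abs
    rw [← integral_add i₂ i₁]
    refine integral_mono (h₂.sub h₁).abs (i₂.add i₁) fun a => ?_
    simpa only [Real.dist_eq] using dist_triangle_right (f₂ a) (f₁ a) (g a)
  by_cases h : 1 / 2 * ∫ a, |f₂ a - f₁ a| ∂μ ≤ ∫ a, |f₁ a - g a| ∂μ
  · exact ⟨f₁, Or.inl rfl, h⟩
  · exact ⟨f₂, Or.inr rfl, by linarith⟩

end Indicator

section Samples

variable {d n : ℕ} (x : Fin n → Fin d → ℝ)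

def sampleUpperSet : Set (Fin d → ℝ) :=
  ⋃ (i) (_ : (2 ^ d)⁻¹ < ∏ j, x i j), Ici (x i)

def sampleLowerSet : Set (Fin d → ℝ) :=
  ⋃ (i) (_ : ∏ j, x i j ≤ (2 ^ d)⁻¹), Iic (x i)

noncomputable def cornerBox (i : Fin n) : Set (Fin d → ℝ) :=
  if (2 ^ d)⁻¹ < ∏ j, x i j then Icc (x i) 1 else Icc 0 (x i)

lemma isUpperSet_sampleUpperSet : IsUpperSet (sampleUpperSet x) :=
  isUpperSet_iUnion₂ fun _ _ => isUpperSet_Ici _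

lemma isLowerSet_sampleLowerSet : IsLowerSet (sampleLowerSet x) :=
  isLowerSet_iUnion₂ fun _ _ => isLowerSet_Iic _

lemma measurableSet_sampleUpperSet : MeasurableSet (sampleUpperSet x) :=
  .iUnion fun _ => .iUnion fun _ => measurableSet_Ici

lemma measurableSet_sampleLowerSet : MeasurableSet (sampleLowerSet x) :=
  .iUnion fun _ => .iUnion fun _ => measurableSet_Iic

lemma mem_sampleUpperSet_union_sampleLowerSet (i : Fin n) :
    x i ∈ sampleUpperSet x ∪ sampleLowerSet x := by
  rcases lt_or_ge ((2 ^ d)⁻¹ : ℝ) (∏ j, x i j) with h | h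
  · exact .inl (mem_iUnion₂.2 ⟨i, h, mem_Ici.2 le_rfl⟩)
  · exact .inr (mem_iUnion₂.2 ⟨i, h, mem_Iic.2 le_rfl⟩)

variable {x}

lemma disjoint_sampleUpperSet_sampleLowerSet (hx : ∀ i, 0 ≤ x i) :
    Disjoint (sampleUpperSet x) (sampleLowerSet x) := by
  refine disjoint_left.2 fun y hU hV => ?_
  obtain ⟨i, hi, hiy⟩ := mem_iUnion₂.1 hU
  obtain ⟨k, hk, hyk⟩ := mem_iUnion₂.1 hV
  have hmono : ∏ j, x i j ≤ ∏ j, x k j :=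
    Finset.prod_le_prod (fun j _ => hx i j) fun j _ =>
      le_trans (mem_Ici.1 hiy) (mem_Iic.1 hyk) j
  exact (hi.trans_le (hmono.trans hk)).false

lemma volume_real_cornerBox_le (hx : ∀ i, x i ∈ Icc 0 1) (i : Fin n) :
    volume.real (cornerBox x i) ≤ (2 ^ d)⁻¹ := by
  have h := prod_le_or_prod_one_sub_le (hx i).1 (hx i).2
  rw [Fintype.card_fin] at h
  unfold cornerBox
  split_ifs with hi
  · rw [Measure.real_def, Real.volume_Icc_pi_toReal (hx i).2]
    exact h.resolve_left hi.not_ge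
  · rw [Measure.real_def, Real.volume_Icc_pi_toReal (hx i).1]
    simpa using not_lt.1 hi

lemma union_inter_Icc_subset_iUnion_cornerBox :
    (sampleUpperSet x ∪ sampleLowerSet x) ∩ Icc 0 1 ⊆ ⋃ i, cornerBox x i := by
  rintro y ⟨hU | hV, hy⟩
  · obtain ⟨i, hi, hiy⟩ := mem_iUnion₂.1 hU
    exact mem_iUnion.2 ⟨i, by simpa [cornerBox, hi] using ⟨hiy, hy.2⟩⟩
  · obtain ⟨i, hi, hyi⟩ := mem_iUnion₂.1 hV
    exact mem_iUnion.2 ⟨i, by simpa [cornerBox, hi.not_gt] using ⟨hy.1, hyi⟩⟩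

lemma volume_real_union_inter_Icc_le (hx : ∀ i, x i ∈ Icc 0 1) :
    volume.real ((sampleUpperSet x ∪ sampleLowerSet x) ∩ Icc 0 1) ≤ n / 2 ^ d := by
  have hfin : volume (⋃ i, cornerBox x i) ≠ ⊤ :=
    (measure_iUnion_fintype_le _ _ |>.trans_lt <| ENNReal.sum_lt_top.2 fun i _ => by
      unfold cornerBox
      split_ifs <;> exact measure_Icc_lt_top).ne
  calc volume.real ((sampleUpperSet x ∪ sampleLowerSet x) ∩ Icc 0 1)
      ≤ volume.real (⋃ i, cornerBox x i) :=
        measureReal_mono union_inter_Icc_subset_iUnion_cornerBox hfin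
    _ ≤ ∑ i, volume.real (cornerBox x i) := measureReal_iUnion_fintype_le _
    _ ≤ ∑ _i : Fin n, ((2 : ℝ) ^ d)⁻¹ :=
        Finset.sum_le_sum fun i _ => volume_real_cornerBox_le hx i
    _ = n / 2 ^ d := by simp [div_eq_mul_inv]

end Samples

theorem stmt9_general (d n : ℕ)
    (x : Fin n → Fin d → ℝ) (hx : ∀ i, x i ∈ Set.Icc (0 : Fin d → ℝ) 1) :
    ∃ fm fp : (Fin d → ℝ) → ℝ,
      (∀ y ∈ Set.Icc (0 : Fin d → ℝ) 1, fm y ∈ Set.Icc (0 : ℝ) 1) ∧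
      (∀ y ∈ Set.Icc (0 : Fin d → ℝ) 1, fp y ∈ Set.Icc (0 : ℝ) 1) ∧
      (∀ y ∈ Set.Icc (0 : Fin d → ℝ) 1, ∀ z ∈ Set.Icc (0 : Fin d → ℝ) 1,
        y ≤ z → fm y ≤ fm z) ∧
      (∀ y ∈ Set.Icc (0 : Fin d → ℝ) 1, ∀ z ∈ Set.Icc (0 : Fin d → ℝ) 1,
        y ≤ z → fp y ≤ fp z) ∧
      (∀ y ∈ Set.Icc (0 : Fin d → ℝ) 1, fm y ≤ fp y) ∧
      (∀ i, fm (x i) = fp (x i)) ∧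
      (1 - (n : ℝ) / 2 ^ d ≤ ∫ y in Set.Icc (0 : Fin d → ℝ) 1, (fp y - fm y)) ∧
      (∀ φ : (Fin n → ℝ) → Lp ℝ 1 ((volume : Measure (Fin d → ℝ)).restrict (Set.Icc 0 1)),
        ∃ f : (Fin d → ℝ) → ℝ, (f = fm ∨ f = fp) ∧
          1 / 2 * (1 - (n : ℝ) / 2 ^ d) ≤
            ∫ y in Set.Icc (0 : Fin d → ℝ) 1, |f y - φ (fun i => f (x i)) y|) := by
  set U := sampleUpperSet x
  set V := sampleLowerSet x
  have hUV : Disjoint U V := disjoint_sampleUpperSet_sampleLowerSet fun i => (hx i).1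
  have hU := measurableSet_sampleUpperSet x
  have hV := measurableSet_sampleLowerSet x
  have : IsFiniteMeasure (volume.restrict (Icc (0 : Fin d → ℝ) 1)) :=
    isFiniteMeasure_restrict.2 measure_Icc_lt_top.ne
  have hagree (i : Fin n) : U.indicator 1 (x i) = Vᶜ.indicator 1 (x i) :=
    indicator_one_eq_indicator_compl_of_mem hUV (mem_sampleUpperSet_union_sampleLowerSet x i)
  have hgap : 1 - (n : ℝ) / 2 ^ d ≤ ∫ y in Icc 0 1, (Vᶜ.indicator 1 y - U.indicator 1 y) := by
    rw [integral_indicator_compl_sub_indicator hUV hU hV, measureReal_restrict_apply (hU.union hV),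
      measureReal_restrict_apply_univ, Measure.real_def, Real.volume_Icc_pi_toReal zero_le_one]
    simp only [Pi.one_apply, Pi.zero_apply, sub_zero, Finset.prod_const_one]
    linarith [volume_real_union_inter_Icc_le hx]
  refine ⟨U.indicator 1, Vᶜ.indicator 1, fun y _ => indicator_one_mem_Icc U y,
    fun y _ => indicator_one_mem_Icc Vᶜ y,
    fun y _ z _ hyz => (isUpperSet_sampleUpperSet x).monotone_indicator_one hyz,
    fun y _ z _ hyz => (isLowerSet_sampleLowerSet x).compl.monotone_indicator_one hyz,
    fun y _ => indicator_one_le_indicator_compl hUV y, hagree, hgap, fun φ => ?_⟩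
  obtain ⟨f, hf, hfar⟩ := exists_half_integral_abs_sub_le
    ((integrable_const 1).indicator hU) ((integrable_const 1).indicator hV.compl)
    (L1.integrable_coeFn (φ fun i => U.indicator 1 (x i)))
  have hfx : (fun i => f (x i)) = fun i => U.indicator 1 (x i) := by
    rcases hf with rfl | rfl
    exacts [rfl, funext fun i => (hagree i).symm]
  refine ⟨f, hf, hfx ▸ le_trans ?_ hfar⟩
  gcongr
  refine hgap.trans_eq (integral_congr_ae (.of_forall fun y => ?_))
  exact (abs_of_nonneg (sub_nonneg.2 (indicator_one_le_indicator_compl hUV y))).symm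

theorem stmt9 (d n : ℕ) (hd : 1 ≤ d) (hn : 1 ≤ n)
    (x : Fin n → Fin d → ℝ) (hx : ∀ i, x i ∈ Set.Icc (0 : Fin d → ℝ) 1) :
    ∃ fm fp : (Fin d → ℝ) → ℝ,
      (∀ y ∈ Set.Icc (0 : Fin d → ℝ) 1, fm y ∈ Set.Icc (0 : ℝ) 1) ∧
      (∀ y ∈ Set.Icc (0 : Fin d → ℝ) 1, fp y ∈ Set.Icc (0 : ℝ) 1) ∧
      (∀ y ∈ Set.Icc (0 : Fin d → ℝ) 1, ∀ z ∈ Set.Icc (0 : Fin d → ℝ) 1,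
        y ≤ z → fm y ≤ fm z) ∧
      (∀ y ∈ Set.Icc (0 : Fin d → ℝ) 1, ∀ z ∈ Set.Icc (0 : Fin d → ℝ) 1,
        y ≤ z → fp y ≤ fp z) ∧
      (∀ y ∈ Set.Icc (0 : Fin d → ℝ) 1, fm y ≤ fp y) ∧
      (∀ i, fm (x i) = fp (x i)) ∧
      (1 - (n : ℝ) / 2 ^ d ≤ ∫ y in Set.Icc (0 : Fin d → ℝ) 1, (fp y - fm y)) ∧
      (∀ φ : (Fin n → ℝ) → Lp ℝ 1 ((volume : Measure (Fin d → ℝ)).restrict (Set.Icc 0 1)),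
        ∃ f : (Fin d → ℝ) → ℝ, (f = fm ∨ f = fp) ∧
          1 / 2 * (1 - (n : ℝ) / 2 ^ d) ≤
            ∫ y in Set.Icc (0 : Fin d → ℝ) 1, |f y - φ (fun i => f (x i)) y|) :=
  stmt9_general d n x hx
end

section
/- Let d, n ∈ ℕ and let x₁, …, x_n ∈ {0,1}^d. Then there exist monotone Boolean functions f₋, f₊ : {0,1}^d → {0,1} with f₋ ≤ f₊ pointwise, f₋(x_i) = f₊(x_i) for all i = 1, …, n, and 2^{−d} · #{x ∈ {0,1}^d : f₋(x) ≠ f₊(x)} ≥ 1 − n · 2^{−⌊d/2⌋}. -/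
open Finset

def wt {d : ℕ} (x : Fin d → Bool) : ℕ := (univ.filter fun j => x j = true).card

lemma wt_mono {d : ℕ} {a b : Fin d → Bool} (h : ∀ j, a j ≤ b j) : wt a ≤ wt b := by
  apply Finset.card_le_card
  intro j hj
  simp only [Finset.mem_filter, Finset.mem_univ, true_and] at *
  exact Bool.le_iff_imp.mp (h j) hj

lemma wt_compl {d : ℕ} (x : Fin d → Bool) :
    wt x + (univ.filter fun j => x j = false).card = d := by
  classical
  have : (univ.filter fun j => x j = false) = (univ.filter fun j => ¬ (x j = true)) := by
    apply Finset.filter_congr; intro j _; simp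
  rw [wt, this, Finset.card_filter_add_card_filter_not, Finset.card_univ,
    Fintype.card_fin]

lemma upcard {d : ℕ} (x : Fin d → Bool) :
    (univ.filter fun y : Fin d → Bool => ∀ j, x j ≤ y j).card ≤
      2 ^ ((univ.filter fun j => x j = false).card) := by
  classical
  have h := Finset.card_le_card_of_injOn
    (f := fun (y : Fin d → Bool) (j : {j // x j = false}) => y j.1)
    (s := univ.filter fun y : Fin d → Bool => ∀ j, x j ≤ y j)
    (t := (Finset.univ : Finset ({j // x j = false} → Bool)))
    (fun y _ => Finset.mem_univ _) ?_
  · calc _ ≤ _ := h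
      _ = 2 ^ ((univ.filter fun j => x j = false).card) := by
        rw [Finset.card_univ, Fintype.card_fun, Fintype.card_bool, Fintype.card_subtype]
  · intro y hy z hz hyz
    simp only [Finset.coe_filter, Set.mem_setOf_eq, Finset.mem_univ, true_and] at hy hz
    funext j
    cases hx : x j with
    | false => exact congrFun hyz ⟨j, hx⟩
    | true =>
      have h1 : y j = true := by have := hy j; rw [hx] at this; exact Bool.eq_true_of_true_le this
      have h2 : z j = true := by have := hz j; rw [hx] at this; exact Bool.eq_true_of_true_le this
      rw [h1, h2]

lemma downcard {d : ℕ} (x : Fin d → Bool) :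
    (univ.filter fun y : Fin d → Bool => ∀ j, y j ≤ x j).card ≤ 2 ^ wt x := by
  classical
  have h := Finset.card_le_card_of_injOn
    (f := fun (y : Fin d → Bool) (j : {j // x j = true}) => y j.1)
    (s := univ.filter fun y : Fin d → Bool => ∀ j, y j ≤ x j)
    (t := (Finset.univ : Finset ({j // x j = true} → Bool)))
    (fun y _ => Finset.mem_univ _) ?_
  · calc _ ≤ _ := h
      _ = 2 ^ wt x := by
        rw [Finset.card_univ, Fintype.card_fun, Fintype.card_bool, Fintype.card_subtype, wt]
  · intro y hy z hz hyz
    simp only [Finset.coe_filter, Set.mem_setOf_eq, Finset.mem_univ, true_and] at hy hz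
    funext j
    cases hx : x j with
    | true => exact congrFun hyz ⟨j, hx⟩
    | false =>
      have h1 : y j = false := by
        have := hy j; rw [hx] at this; exact Bool.eq_false_of_le_false this
      have h2 : z j = false := by
        have := hz j; rw [hx] at this; exact Bool.eq_false_of_le_false this
      rw [h1, h2]

theorem stmt10 (d n : ℕ) (hd : 1 ≤ d) (hn : 1 ≤ n)
    (x : Fin n → Fin d → Bool) :
    ∃ fm fp : (Fin d → Bool) → Bool,
      (∀ y z : Fin d → Bool, (∀ j, y j ≤ z j) → fm y ≤ fm z) ∧
      (∀ y z : Fin d → Bool, (∀ j, y j ≤ z j) → fp y ≤ fp z) ∧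
      (∀ y, fm y ≤ fp y) ∧
      (∀ i, fm (x i) = fp (x i)) ∧
      1 - (n : ℝ) / 2 ^ (d / 2) ≤
        ((Finset.univ.filter fun y : Fin d → Bool => fm y ≠ fp y).card : ℝ) / 2 ^ d := by
  classical
  set t := (d + 1) / 2 with ht
  set fm : (Fin d → Bool) → Bool :=
    fun y => decide (∃ i, t ≤ wt (x i) ∧ ∀ j, x i j ≤ y j) with hfm
  set fp : (Fin d → Bool) → Bool :=
    fun y => decide (¬ ∃ i, wt (x i) < t ∧ ∀ j, y j ≤ x i j) with hfp
  have hmle : ∀ y, fm y = true → ∀ i, wt (x i) < t → ¬ ∀ j, y j ≤ x i j := by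
    intro y hy i hi hle
    obtain ⟨k, hk, hkle⟩ := of_decide_eq_true hy
    have : wt (x k) ≤ wt (x i) := wt_mono (fun j => le_trans (hkle j) (hle j))
    omega
  refine ⟨fm, fp, ?_, ?_, ?_, ?_, ?_⟩
  · intro y z h
    simp only [hfm, Bool.le_iff_imp, decide_eq_true_eq]
    rintro ⟨i, hi, hle⟩
    exact ⟨i, hi, fun j => le_trans (hle j) (h j)⟩
  · intro y z h
    simp only [hfp, Bool.le_iff_imp, decide_eq_true_eq]
    intro hy ⟨i, hi, hle⟩
    exact hy ⟨i, hi, fun j => le_trans (h j) (hle j)⟩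
  · intro y
    rw [Bool.le_iff_imp]
    intro hy
    apply decide_eq_true
    rintro ⟨i, hi, hle⟩
    exact hmle y hy i hi hle
  · intro i
    by_cases hi : t ≤ wt (x i)
    · have h1 : fm (x i) = true := decide_eq_true ⟨i, hi, fun j => le_refl _⟩
      have h2 : fp (x i) = true := by
        apply decide_eq_true
        rintro ⟨k, hk, hkle⟩
        have : wt (x i) ≤ wt (x k) := wt_mono hkle
        omega
      rw [h1, h2]
    · have h1 : fm (x i) = false := by
        apply decide_eq_false
        rintro ⟨k, hk, hkle⟩
        have : wt (x k) ≤ wt (x i) := wt_mono hkle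
        omega
      have h2 : fp (x i) = false := by
        apply decide_eq_false
        exact not_not_intro ⟨i, by omega, fun j => le_refl _⟩
      rw [h1, h2]
  · -- counting
    set A := (Finset.univ.filter fun y : Fin d → Bool => fm y ≠ fp y) with hA
    set B := (Finset.univ.filter fun y : Fin d → Bool => ¬ fm y ≠ fp y) with hB
    set S : Fin n → Finset (Fin d → Bool) := fun i =>
      if t ≤ wt (x i) then univ.filter (fun y => ∀ j, x i j ≤ y j)
      else univ.filter (fun y => ∀ j, y j ≤ x i j) with hS
    have hwtd : ∀ i, wt (x i) ≤ d := by
      intro i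
      have := wt_compl (x i); omega
    have hScard : ∀ i, (S i).card ≤ 2 ^ (d / 2) := by
      intro i
      rw [hS]
      beta_reduce
      split_ifs with hi
      · refine le_trans (upcard (x i)) (Nat.pow_le_pow_right (by norm_num) ?_)
        have := wt_compl (x i); omega
      · refine le_trans (downcard (x i)) (Nat.pow_le_pow_right (by norm_num) ?_)
        omega
    have hsub : B ⊆ univ.biUnion S := by
      intro y hy
      rw [hB, Finset.mem_filter] at hy
      have heq : fm y = fp y := not_not.mp hy.2
      rw [Finset.mem_biUnion]
      cases hv : fm y with
      | true =>
        obtain ⟨i, hi, hle⟩ := of_decide_eq_true hv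
        refine ⟨i, Finset.mem_univ _, ?_⟩
        rw [hS]
        simp only [if_pos hi, Finset.mem_filter, Finset.mem_univ, true_and]
        exact hle
      | false =>
        have hv' : fp y = false := heq ▸ hv
        have := of_decide_eq_false hv'
        obtain ⟨i, hi, hle⟩ := not_not.mp this
        refine ⟨i, Finset.mem_univ _, ?_⟩
        rw [hS]
        simp only [if_neg (not_le.mpr hi), Finset.mem_filter, Finset.mem_univ, true_and]
        exact hle
    have hBcard : B.card ≤ n * 2 ^ (d / 2) := by
      calc B.card ≤ (univ.biUnion S).card := Finset.card_le_card hsub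
        _ ≤ ∑ i : Fin n, (S i).card := Finset.card_biUnion_le
        _ ≤ ∑ i : Fin n, 2 ^ (d / 2) := Finset.sum_le_sum (fun i _ => hScard i)
        _ = n * 2 ^ (d / 2) := by rw [Finset.sum_const, Finset.card_univ, Fintype.card_fin,
            smul_eq_mul]
    have hABsum : A.card + B.card = 2 ^ d := by
      rw [hA, hB, Finset.card_filter_add_card_filter_not, Finset.card_univ]
      simp [Fintype.card_fun]
    have h2d : (0 : ℝ) < 2 ^ d := by positivity
    have hk : (0 : ℝ) < 2 ^ (d / 2) := by positivity
    have hABr : (A.card : ℝ) = 2 ^ d - B.card := by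
      have : (A.card : ℝ) + B.card = 2 ^ d := by exact_mod_cast hABsum
      linarith
    have hstep : (A.card : ℝ) / 2 ^ d = 1 - (B.card : ℝ) / 2 ^ d := by
      rw [hABr]; field_simp
    rw [hstep, sub_le_sub_iff_left, div_le_div_iff₀ h2d hk]
    have hBr : (B.card : ℝ) ≤ n * 2 ^ (d / 2) := by exact_mod_cast hBcard
    calc (B.card : ℝ) * 2 ^ (d / 2) ≤ (n * 2 ^ (d / 2)) * 2 ^ (d / 2) := by
          apply mul_le_mul_of_nonneg_right hBr (le_of_lt hk)
      _ = n * 2 ^ (d / 2 + d / 2) := by rw [pow_add]; ring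
      _ ≤ n * 2 ^ d := by
          apply mul_le_mul_of_nonneg_left _ (by positivity)
          apply pow_le_pow_right₀ (by norm_num)
          omega
end

section
/- Let d ∈ ℕ, m ∈ ℕ₀, and let f : [0,1]^d → [0,1] be monotone. Partition [0,1]^d into (m+1)^d subcubes C_i = ∏_{j=1}^d I_{i_j} indexed by i ∈ {0,…,m}^d, where I_i = [i/(m+1), (i+1)/(m+1)) for 0 ≤ i ≤ m−1 and I_m = [m/(m+1), 1]. Define g : [0,1]^d → [0,1] by setting, for x ∈ C_i, g(x) = (f(i/(m+1)) + f((i+1)/(m+1)))/2, where i/(m+1) and (i+1)/(m+1) ∈ [0,1]^d are the lower and upper corners of C_i (here i+1 adds 1 to every coordinate of i). Then ∫_{[0,1]^d} |f − g| dλ^d ≤ d / (2(m+1)). -/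
open MeasureTheory Set Finset

/-!
On a cell `C_i` monotonicity squeezes `f` between its values at the two corners, so
`|f - g| ≤ (f(upper corner) - f(lower corner)) / 2` there, a step function whose integral is
`(m+1)^{-d} / 2` times the sum over all cells of the corner differences. Each diagonal increment
splits into `d` increments along single coordinates; along each of the `(m+1)^{d-1}` grid lines in a
given direction these telescope to a difference of two values of `f`, hence to at most `1` since
`0 ≤ f ≤ 1`. The sum is thus at most `d (m+1)^{d-1}`; formally, by induction on `d`, splitting off
the first coordinate.
-/

lemma MonotoneOn.abs_sub_midpoint_le {α 𝕜 : Type*} [Preorder α] [Field 𝕜] [LinearOrder 𝕜]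
    [IsStrictOrderedRing 𝕜] {f : α → 𝕜} {s : Set α} (hf : MonotoneOn f s) {a b x : α}
    (ha : a ∈ s) (hb : b ∈ s) (hx : x ∈ s) (hax : a ≤ x) (hxb : x ≤ b) :
    |f x - (f a + f b) / 2| ≤ (f b - f a) / 2 := by
  have := hf ha hx hax
  have := hf hx hb hxb
  rw [abs_le]
  constructor <;> linarith

lemma sum_fin_sub_le_one {n : ℕ} {G : ℕ → ℝ} (hG : ∀ k ≤ n, G k ∈ Icc (0 : ℝ) 1) :
    ∑ a : Fin n, (G (a + 1) - G a) ≤ 1 := by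
  rw [Fin.sum_univ_eq_sum_range (fun a => G (a + 1) - G a), sum_range_sub]
  linarith [(hG n le_rfl).2, (hG 0 n.zero_le).1]

lemma sum_grid_diagonal_sub_le (n : ℕ) : ∀ (d : ℕ) (F : (Fin d → ℕ) → ℝ),
    (∀ a, (∀ j, a j ≤ n) → F a ∈ Icc (0 : ℝ) 1) →
    ∑ i : Fin d → Fin n, (F (fun j => i j + 1) - F (fun j => i j)) ≤ d * n ^ (d - 1)
  | 0, F, _ => by simpa using le_of_eq (congrArg F (Subsingleton.elim _ _))
  | d + 1, F, hF => by
    have hcons : ∀ (g : Fin n → ℕ) (a : Fin n) (r : Fin d → Fin n),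
        (fun j => g ((Fin.cons a r : Fin (d + 1) → Fin n) j)) =
          Fin.cons (g a) (fun j => g (r j)) :=
      fun g a r => Fin.comp_cons g a r
    rw [← (Fin.consEquiv fun _ => Fin n).sum_comp, Fintype.sum_prod_type]
    simp only [Fin.consEquiv_apply, hcons (fun b => b + 1), hcons (fun b => b)]
    have hsplit : ∀ (a : Fin n) (r : Fin d → Fin n),
        F (Fin.cons (a + 1 : ℕ) fun j => r j + 1) - F (Fin.cons (a : ℕ) fun j => r j) =
          (F (Fin.cons (a + 1 : ℕ) fun j => r j + 1) - F (Fin.cons (a : ℕ) fun j => r j + 1)) +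
          (F (Fin.cons (a : ℕ) fun j => r j + 1) - F (Fin.cons (a : ℕ) fun j => r j)) :=
      fun _ _ => by ring
    simp only [hsplit, sum_add_distrib]
    have hfirst : ∑ a : Fin n, ∑ r : Fin d → Fin n,
        (F (Fin.cons (a + 1 : ℕ) fun j => r j + 1) - F (Fin.cons (a : ℕ) fun j => r j + 1))
          ≤ n ^ d := by
      rw [sum_comm]
      calc _ ≤ ∑ _r : Fin d → Fin n, (1 : ℝ) := sum_le_sum fun r _ =>
            sum_fin_sub_le_one (G := fun k => F (Fin.cons k fun j => r j + 1)) fun k hk =>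
              hF _ (Fin.forall_fin_succ.2 ⟨by simpa using hk, fun j => by simp [(r j).is_lt]⟩)
        _ = n ^ d := by simp
    have hrest : ∑ a : Fin n, ∑ r : Fin d → Fin n,
        (F (Fin.cons (a : ℕ) fun j => r j + 1) - F (Fin.cons (a : ℕ) fun j => r j))
          ≤ n * (d * n ^ (d - 1)) := by
      calc _ ≤ ∑ _a : Fin n, (d * n ^ (d - 1) : ℝ) := sum_le_sum fun a _ =>
            sum_grid_diagonal_sub_le n d (fun b => F (Fin.cons (a : ℕ) b)) fun b hb =>
              hF _ (Fin.forall_fin_succ.2 ⟨by simp [a.is_lt.le], by simpa using hb⟩)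
        _ = n * (d * n ^ (d - 1)) := by simp
    calc _ ≤ (n : ℝ) ^ d + n * (d * n ^ (d - 1)) := add_le_add hfirst hrest
      _ = (d + 1 : ℕ) * n ^ (d + 1 - 1) := by
        rcases d with _ | d
        · simp
        · push_cast; ring

section GridCells

variable {d m : ℕ}

/-- `min · m` puts the right endpoint `1` into the last cell. -/
noncomputable def cellIndex (m : ℕ) (t : ℝ) : Fin (m + 1) :=
  ⟨min ⌊((m : ℝ) + 1) * t⌋₊ m, Nat.lt_succ_of_le (min_le_right _ _)⟩

def cellInterval (m k : ℕ) : Set ℝ :=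
  Ico ((k : ℝ) / ((m : ℝ) + 1)) (((k : ℝ) + 1) / ((m : ℝ) + 1))

def gridCell (m : ℕ) (i : Fin d → Fin (m + 1)) : Set (Fin d → ℝ) :=
  univ.pi fun j => cellInterval m (i j)

lemma cellIndex_eq_of_mem_cellInterval {k : Fin (m + 1)} {t : ℝ} (ht : t ∈ cellInterval m k) :
    cellIndex m t = k := by
  obtain ⟨h₁, h₂⟩ := ht
  rw [div_le_iff₀ (by positivity)] at h₁
  rw [lt_div_iff₀ (by positivity)] at h₂
  have hfloor : ⌊((m : ℝ) + 1) * t⌋₊ = k :=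
    (Nat.floor_eq_iff (by rw [mul_comm]; exact (Nat.cast_nonneg _).trans h₁)).2
      ⟨by linarith, by linarith⟩
  ext
  simp [cellIndex, hfloor, Nat.le_of_lt_succ k.is_lt]

lemma cellIndex_div_le {t : ℝ} (ht : 0 ≤ t) :
    ((cellIndex m t : ℕ) : ℝ) / ((m : ℝ) + 1) ≤ t := by
  rw [div_le_iff₀ (by positivity), mul_comm]
  have hle : (cellIndex m t : ℕ) ≤ ⌊((m : ℝ) + 1) * t⌋₊ := min_le_left _ _
  exact (Nat.cast_le.2 hle).trans (Nat.floor_le (by positivity))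

lemma le_cellIndex_add_one_div {t : ℝ} (ht : t ≤ 1) :
    t ≤ (((cellIndex m t : ℕ) + 1 : ℕ) : ℝ) / ((m : ℝ) + 1) := by
  rw [le_div_iff₀ (by positivity), mul_comm]
  rcases le_total ⌊((m : ℝ) + 1) * t⌋₊ m with h | h
  · simpa [cellIndex, h] using (Nat.lt_floor_add_one (((m : ℝ) + 1) * t)).le
  · simp only [cellIndex, min_eq_right h]
    push_cast
    nlinarith

lemma mem_cellInterval_cellIndex {t : ℝ} (ht : t ∈ Ico (0 : ℝ) 1) :
    t ∈ cellInterval m (cellIndex m t) := by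
  have hfloor : ⌊((m : ℝ) + 1) * t⌋₊ ≤ m := by
    rw [← Nat.lt_succ_iff, Nat.floor_lt (by nlinarith [ht.1])]
    push_cast
    nlinarith [ht.2]
  refine ⟨cellIndex_div_le ht.1, ?_⟩
  rw [lt_div_iff₀ (by positivity), mul_comm]
  simpa [cellIndex, hfloor] using Nat.lt_floor_add_one (((m : ℝ) + 1) * t)

lemma cellIndex_eq_of_mem_gridCell {i : Fin d → Fin (m + 1)} {x : Fin d → ℝ}
    (hx : x ∈ gridCell m i) : (fun j => cellIndex m (x j)) = i :=
  funext fun j => cellIndex_eq_of_mem_cellInterval (hx j (mem_univ j))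

lemma pairwise_disjoint_gridCell : Pairwise (Function.onFun Disjoint (gridCell (d := d) m)) :=
  fun _ _ hne => disjoint_left.2 fun _ hx hx' =>
    hne ((cellIndex_eq_of_mem_gridCell hx).symm.trans (cellIndex_eq_of_mem_gridCell hx'))

lemma measurableSet_gridCell (i : Fin d → Fin (m + 1)) : MeasurableSet (gridCell m i) :=
  MeasurableSet.univ_pi fun _ => measurableSet_Ico

lemma iUnion_gridCell : ⋃ i, gridCell (d := d) m i = univ.pi fun _ => Ico 0 1 := by
  refine Subset.antisymm (iUnion_subset fun i x hx j _ => ?_) fun x hx => ?_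
  · obtain ⟨h₁, h₂⟩ := hx j (mem_univ j)
    have hk : ((i j : ℕ) : ℝ) + 1 ≤ (m : ℝ) + 1 := by exact_mod_cast (i j).is_lt
    exact ⟨(by positivity : (0 : ℝ) ≤ _).trans h₁,
      h₂.trans_le ((div_le_one (by positivity)).2 hk)⟩
  · exact mem_iUnion.2
      ⟨fun j => cellIndex m (x j), fun j _ => mem_cellInterval_cellIndex (hx j (mem_univ j))⟩

lemma Icc_ae_eq_iUnion_gridCell :
    Icc (0 : Fin d → ℝ) 1 =ᵐ[volume] ⋃ i, gridCell (d := d) m i := by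
  rw [iUnion_gridCell]
  exact Measure.univ_pi_Ico_ae_eq_Icc.symm

lemma volume_gridCell (i : Fin d → Fin (m + 1)) :
    volume (gridCell m i) = ENNReal.ofReal (1 / ((m : ℝ) + 1)) ^ d := by
  simp only [gridCell, cellInterval, volume_pi_pi, Real.volume_Ico, ← sub_div,
    add_sub_cancel_left, prod_const, card_univ, Fintype.card_fin]

lemma eqOn_gridCell_comp_cellIndex {E : Type*} (g : (Fin d → Fin (m + 1)) → E)
    (i : Fin d → Fin (m + 1)) :
    EqOn (fun x => g fun j => cellIndex m (x j)) (fun _ => g i) (gridCell m i) :=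
  fun _ hx => congrArg g (cellIndex_eq_of_mem_gridCell hx)

lemma integrableOn_gridCell_comp_cellIndex (g : (Fin d → Fin (m + 1)) → ℝ)
    (i : Fin d → Fin (m + 1)) :
    IntegrableOn (fun x : Fin d → ℝ => g fun j => cellIndex m (x j)) (gridCell m i) := by
  rw [integrableOn_congr_fun (eqOn_gridCell_comp_cellIndex g i) (measurableSet_gridCell i)]
  exact integrableOn_const (by rw [volume_gridCell]; finiteness)

lemma integrableOn_Icc_comp_cellIndex (g : (Fin d → Fin (m + 1)) → ℝ) :
    IntegrableOn (fun x : Fin d → ℝ => g fun j => cellIndex m (x j)) (Icc 0 1) :=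
  (integrableOn_finite_iUnion.2 (integrableOn_gridCell_comp_cellIndex g)).congr_set_ae
    Icc_ae_eq_iUnion_gridCell

lemma setIntegral_Icc_comp_cellIndex (g : (Fin d → Fin (m + 1)) → ℝ) :
    ∫ x in Icc (0 : Fin d → ℝ) 1, g (fun j => cellIndex m (x j)) =
      (∑ i, g i) / ((m : ℝ) + 1) ^ d := by
  rw [setIntegral_congr_set Icc_ae_eq_iUnion_gridCell,
    integral_iUnion_fintype measurableSet_gridCell pairwise_disjoint_gridCell
      (integrableOn_gridCell_comp_cellIndex g), sum_div]
  refine sum_congr rfl fun i _ => ?_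
  rw [setIntegral_congr_fun (measurableSet_gridCell i) (eqOn_gridCell_comp_cellIndex g i),
    setIntegral_const, measureReal_def, volume_gridCell, ENNReal.toReal_pow,
    ENNReal.toReal_ofReal (by positivity), smul_eq_mul, one_div, inv_pow, mul_comm, div_eq_mul_inv]

lemma natCast_div_mem_Icc {a : Fin d → ℕ} (ha : ∀ j, a j ≤ m + 1) :
    (fun j => (a j : ℝ) / ((m : ℝ) + 1)) ∈ Icc (0 : Fin d → ℝ) 1 :=
  ⟨fun j => by positivity, fun j => (div_le_one (by positivity)).2 <| by
    rw [← Nat.cast_succ]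
    exact Nat.cast_le.2 (ha j)⟩

end GridCells

theorem stmt11_general (d : ℕ) (m : ℕ)
    (f : (Fin d → ℝ) → ℝ)
    (hf01 : ∀ x ∈ Set.Icc (0 : Fin d → ℝ) 1, f x ∈ Set.Icc (0 : ℝ) 1)
    (hmono : ∀ x ∈ Set.Icc (0 : Fin d → ℝ) 1, ∀ z ∈ Set.Icc (0 : Fin d → ℝ) 1,
      x ≤ z → f x ≤ f z) :
    (∫ x in Set.Icc (0 : Fin d → ℝ) 1,
        |f x -
          (f (fun j => ((min ⌊((m : ℝ) + 1) * x j⌋₊ m : ℕ) : ℝ) / ((m : ℝ) + 1)) +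
           f (fun j => ((min ⌊((m : ℝ) + 1) * x j⌋₊ m + 1 : ℕ) : ℝ) / ((m : ℝ) + 1))) / 2|)
      ≤ (d : ℝ) / (2 * ((m : ℝ) + 1)) := by
  have hf : MonotoneOn f (Icc 0 1) := fun x hx z hz hxz => hmono x hx z hz hxz
  let F : (Fin d → ℕ) → ℝ := fun a => f fun j => (a j : ℝ) / ((m : ℝ) + 1)
  let g : (Fin d → Fin (m + 1)) → ℝ := fun i => (F (fun j => i j + 1) - F (fun j => i j)) / 2
  have hpt : ∀ x ∈ Icc (0 : Fin d → ℝ) 1,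
      |f x - (F (fun j => cellIndex m (x j)) + F (fun j => cellIndex m (x j) + 1)) / 2|
        ≤ g fun j => cellIndex m (x j) := fun x hx =>
    hf.abs_sub_midpoint_le (natCast_div_mem_Icc fun j => (cellIndex m (x j)).is_lt.le)
      (natCast_div_mem_Icc fun j => (cellIndex m (x j)).is_lt) hx
      (fun j => cellIndex_div_le (hx.1 j)) (fun j => le_cellIndex_add_one_div (hx.2 j))
  have hsum : ∑ i, g i ≤ d * ((m : ℝ) + 1) ^ (d - 1) / 2 := by
    rw [← sum_div]
    gcongr
    exact_mod_cast sum_grid_diagonal_sub_le (m + 1) d F fun a ha =>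
      hf01 _ (natCast_div_mem_Icc ha)
  -- `f` need not be measurable: only the dominating step function has to be integrable.
  calc _ ≤ ∫ x in Icc (0 : Fin d → ℝ) 1, g fun j => cellIndex m (x j) :=
        setIntegral_mono_of_nonneg (fun _ _ => abs_nonneg _) hpt
          (integrableOn_Icc_comp_cellIndex g)
    _ = (∑ i, g i) / ((m : ℝ) + 1) ^ d := setIntegral_Icc_comp_cellIndex g
    _ ≤ d * ((m : ℝ) + 1) ^ (d - 1) / 2 / ((m : ℝ) + 1) ^ d := by gcongr
    _ = d / (2 * ((m : ℝ) + 1)) := by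
        rcases d with _ | d
        · simp
        · rw [Nat.add_sub_cancel]
          field_simp
          ring

theorem stmt11 (d : ℕ) (hd : 1 ≤ d) (m : ℕ)
    (f : (Fin d → ℝ) → ℝ)
    (hf01 : ∀ x ∈ Set.Icc (0 : Fin d → ℝ) 1, f x ∈ Set.Icc (0 : ℝ) 1)
    (hmono : ∀ x ∈ Set.Icc (0 : Fin d → ℝ) 1, ∀ z ∈ Set.Icc (0 : Fin d → ℝ) 1,
      x ≤ z → f x ≤ f z) :
    (∫ x in Set.Icc (0 : Fin d → ℝ) 1,
        |f x -
          (f (fun j => ((min ⌊((m : ℝ) + 1) * x j⌋₊ m : ℕ) : ℝ) / ((m : ℝ) + 1)) +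
           f (fun j => ((min ⌊((m : ℝ) + 1) * x j⌋₊ m + 1 : ℕ) : ℝ) / ((m : ℝ) + 1))) / 2|)
      ≤ (d : ℝ) / (2 * ((m : ℝ) + 1)) :=
  stmt11_general d m f hf01 hmono
end

section
/- Let d ∈ ℕ and let f : {−1,+1}^d → {−1,+1} be monotone. For α ∈ {0,1}^d define the Fourier–Walsh coefficient f̂(α) = 2^{−d} Σ_{x ∈ {−1,+1}^d} x^α f(x), where x^α = ∏_{j=1}^d x_j^{α_j}. Then for every k ∈ ℕ₀: Σ_{α ∈ {0,1}^d, |α|₁ > k} f̂(α)² ≤ √d / (k+1), where |α|₁ = α₁ + ⋯ + α_d. -/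
/-- The Fourier–Walsh character `x ↦ x^α` on `{-1,+1}^d`, where `{-1,+1}` is encoded
by `Bool` (`true ↦ +1`, `false ↦ -1`). -/
noncomputable def chi (d : ℕ) (α x : Fin d → Bool) : ℝ :=
  ∏ j, if α j then (if x j then (1 : ℝ) else -1) else 1

/-!
Flipping coordinate `j` multiplies `χ_α` by `-1` exactly when `j ∈ α`, so Parseval applied to
`f - f ∘ flip_j` gives `∑_{α ∋ j} f̂(α)² = Inf_j f`. For monotone `f` with values `±1`,
`f x - f (flip_j x)` has the sign of `x_j`, whence `Inf_j f = E[x_j f(x)] = f̂({j})`.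
Summing over `j`, `∑_α |α| f̂(α)² = ∑_j f̂({j}) ≤ √d` by Cauchy–Schwarz and Parseval, and
Markov's inequality for the spectral weights `f̂(α)²` bounds the part with `|α| > k`.
-/

namespace BooleanCube

open Finset

variable {d : ℕ}

lemma sum_card_filter_mul {ι κ : Type*} [Fintype ι] [Fintype κ] (p : κ → ι → Prop)
    [∀ a i, Decidable (p a i)] (w : κ → ℝ) :
    ∑ a, ((univ.filter (p a)).card : ℝ) * w a = ∑ i, ∑ a ∈ univ.filter (p · i), w a := by
  simp_rw [card_filter, Nat.cast_sum, Nat.cast_ite, Nat.cast_one, Nat.cast_zero, sum_mul,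
    ite_mul, one_mul, zero_mul, sum_filter]
  exact sum_comm

lemma sum_filter_lt_le_div {ι : Type*} (s : Finset ι) (n : ι → ℕ) {w : ι → ℝ}
    (hw : ∀ i, 0 ≤ w i) (k : ℕ) :
    ∑ i ∈ s.filter (fun i => k < n i), w i ≤ (∑ i ∈ s, n i * w i) / (k + 1) := by
  rw [le_div_iff₀ (by positivity), sum_mul]
  calc ∑ i ∈ s.filter (fun i => k < n i), w i * (k + 1)
      ≤ ∑ i ∈ s.filter (fun i => k < n i), n i * w i := by
        refine sum_le_sum fun i hi => ?_
        have : (k : ℝ) + 1 ≤ n i := by exact_mod_cast (mem_filter.mp hi).2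
        nlinarith [hw i]
    _ ≤ ∑ i ∈ s, n i * w i :=
        sum_le_sum_of_subset_of_nonneg (filter_subset _ _) fun i _ _ =>
          mul_nonneg (Nat.cast_nonneg _) (hw i)

def boolSign (b : Bool) : ℝ := if b then 1 else -1

lemma boolSign_mul_boolSign_add_one (a b : Bool) :
    boolSign a * boolSign b + 1 = if a = b then 2 else 0 := by
  cases a <;> cases b <;> norm_num [boolSign]

lemma chi_mul_chi (α x y : Fin d → Bool) :
    chi d α x * chi d α y = ∏ j, if α j then boolSign (x j) * boolSign (y j) else 1 := by
  rw [chi, chi, ← prod_mul_distrib]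
  exact prod_congr rfl fun j _ => by cases α j <;> simp [boolSign]

lemma sum_chi_mul_chi (x y : Fin d → Bool) :
    ∑ α, chi d α x * chi d α y = if x = y then 2 ^ d else 0 := by
  simp_rw [chi_mul_chi]
  rw [← Fintype.prod_sum fun j (b : Bool) => if b then boolSign (x j) * boolSign (y j) else 1]
  simp_rw [Fintype.sum_bool, if_true, Bool.false_eq_true, if_false,
    boolSign_mul_boolSign_add_one, Fintype.prod_ite_zero, prod_const, card_univ,
    Fintype.card_fin, funext_iff]

theorem sum_sq_sum_chi_mul (g : (Fin d → Bool) → ℝ) :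
    ∑ α, (∑ x, chi d α x * g x) ^ 2 = 2 ^ d * ∑ x, g x ^ 2 := by
  calc ∑ α, (∑ x, chi d α x * g x) ^ 2
      = ∑ x, ∑ y, g x * g y * ∑ α, chi d α x * chi d α y := by
        simp_rw [sq, sum_mul_sum, mul_sum]
        rw [sum_comm]
        refine sum_congr rfl fun x _ => ?_
        rw [sum_comm]
        exact sum_congr rfl fun y _ => sum_congr rfl fun α _ => by ring
    _ = 2 ^ d * ∑ x, g x ^ 2 := by
        simp [sum_chi_mul_chi, mul_sum, sq, mul_comm]

def flipAt (j : Fin d) (x : Fin d → Bool) : Fin d → Bool := Function.update x j (!x j)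

lemma flipAt_involutive (j : Fin d) : Function.Involutive (flipAt j) := by
  intro x
  simp [flipAt]

lemma chi_flipAt (α x : Fin d → Bool) (j : Fin d) :
    chi d α (flipAt j x) = (if α j then -1 else 1) * chi d α x := by
  rw [chi, chi, ← mul_prod_erase univ _ (mem_univ j), ← mul_prod_erase univ _ (mem_univ j),
    ← mul_assoc]
  congr 1
  · simp only [flipAt, Function.update_self]
    cases α j <;> cases x j <;> norm_num
  · exact prod_congr rfl fun l hl => by simp [flipAt, ne_of_mem_erase hl]

lemma sum_chi_mul_sub_comp_flipAt (g : (Fin d → Bool) → ℝ) (α : Fin d → Bool) (j : Fin d) :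
    ∑ x, chi d α x * (g x - g (flipAt j x)) = if α j then 2 * ∑ x, chi d α x * g x else 0 := by
  have hflip : ∑ x, chi d α x * g (flipAt j x) = ∑ x, chi d α (flipAt j x) * g x := by
    simpa only [Function.Involutive.coe_toPerm, flipAt_involutive j _] using
      Equiv.sum_comp ((flipAt_involutive j).toPerm _) fun x => chi d α (flipAt j x) * g x
  simp_rw [mul_sub, sum_sub_distrib, hflip, chi_flipAt, mul_assoc, ← mul_sum]
  split_ifs <;> ring

def unitVector (j : Fin d) : Fin d → Bool := fun l => decide (l = j)

lemma chi_unitVector (j : Fin d) (x : Fin d → Bool) :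
    chi d (unitVector j) x = boolSign (x j) := by
  rw [chi, prod_eq_single j (fun l _ hl => by simp [unitVector, hl]) (by simp)]
  simp [unitVector, boolSign]

lemma unitVector_injective : Function.Injective (unitVector (d := d)) := by
  intro i j h
  simpa [unitVector] using congrFun h i

noncomputable def walshCoeff (f : (Fin d → Bool) → ℝ) (α : Fin d → Bool) : ℝ :=
  (∑ x, chi d α x * f x) / 2 ^ d

/-- For `±1`-valued `f` this is the probability that `f x ≠ f (flipAt j x)`. -/
noncomputable def influence (f : (Fin d → Bool) → ℝ) (j : Fin d) : ℝ :=
  (∑ x, ((f x - f (flipAt j x)) / 2) ^ 2) / 2 ^ d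

theorem sum_walshCoeff_sq_eq_one {f : (Fin d → Bool) → ℝ} (hval : ∀ x, f x = 1 ∨ f x = -1) :
    ∑ α, walshCoeff f α ^ 2 = 1 := by
  have hsq : ∀ x, f x ^ 2 = 1 := fun x => by rcases hval x with h | h <;> simp [h]
  simp_rw [walshCoeff, div_pow, ← sum_div, sum_sq_sum_chi_mul, hsq, sum_const, card_univ,
    Fintype.card_fun, Fintype.card_bool, Fintype.card_fin, nsmul_eq_mul, mul_one]
  field_simp
  norm_cast

theorem sum_walshCoeff_sq_filter_eq_influence (f : (Fin d → Bool) → ℝ) (j : Fin d) :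
    ∑ α ∈ univ.filter (fun α : Fin d → Bool => α j = true), walshCoeff f α ^ 2 =
      influence f j := by
  have h := sum_sq_sum_chi_mul fun x => f x - f (flipAt j x)
  simp only [sum_chi_mul_sub_comp_flipAt, ite_pow, mul_pow, zero_pow two_ne_zero] at h
  rw [← sum_filter, ← mul_sum] at h
  simp_rw [walshCoeff, influence, div_pow, ← sum_div]
  field_simp
  linear_combination h

lemma sq_sub_comp_flipAt_of_monotone {f : (Fin d → Bool) → ℝ}
    (hval : ∀ x, f x = 1 ∨ f x = -1) (hf : Monotone f) (j : Fin d) (x : Fin d → Bool) :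
    (f x - f (flipAt j x)) ^ 2 = 2 * boolSign (x j) * (f x - f (flipAt j x)) := by
  have hsign : 0 ≤ boolSign (x j) * (f x - f (flipAt j x)) := by
    cases hx : x j
    · have : f x ≤ f (flipAt j x) := hf (by simp [flipAt, hx])
      norm_num [boolSign]
      linarith
    · have : f (flipAt j x) ≤ f x := hf (by simp [flipAt, hx])
      norm_num [boolSign]
      linarith
  revert hsign
  rcases hval x with h | h <;> rcases hval (flipAt j x) with h' | h' <;> cases x j <;>
    norm_num [h, h', boolSign]

theorem influence_eq_walshCoeff_unitVector_of_monotone {f : (Fin d → Bool) → ℝ}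
    (hval : ∀ x, f x = 1 ∨ f x = -1) (hf : Monotone f) (j : Fin d) :
    influence f j = walshCoeff f (unitVector j) := by
  have h := sum_chi_mul_sub_comp_flipAt f (unitVector j) j
  simp only [chi_unitVector, unitVector, decide_true, if_true] at h
  simp_rw [influence, walshCoeff, div_pow, sq_sub_comp_flipAt_of_monotone hval hf, chi_unitVector,
    ← sum_div, mul_assoc, ← mul_sum, h]
  ring

theorem sum_card_mul_walshCoeff_sq_eq_sum_influence (f : (Fin d → Bool) → ℝ) :
    ∑ α, ((univ.filter fun j => α j = true).card : ℝ) * walshCoeff f α ^ 2 =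
      ∑ j, influence f j := by
  simp_rw [sum_card_filter_mul, sum_walshCoeff_sq_filter_eq_influence]

theorem sum_walshCoeff_unitVector_le_sqrt {f : (Fin d → Bool) → ℝ}
    (hval : ∀ x, f x = 1 ∨ f x = -1) : ∑ j, walshCoeff f (unitVector j) ≤ √d := by
  have hsq : ∑ j, walshCoeff f (unitVector j) ^ 2 ≤ 1 := by
    rw [← sum_walshCoeff_sq_eq_one hval,
      ← sum_image (f := fun α => walshCoeff f α ^ 2) fun i _ j _ h => unitVector_injective h]
    exact sum_le_sum_of_subset_of_nonneg (subset_univ _) fun α _ _ => sq_nonneg _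
  calc ∑ j, walshCoeff f (unitVector j) = ∑ j, 1 * walshCoeff f (unitVector j) := by simp
    _ ≤ √(∑ _j : Fin d, 1 ^ 2) * √(∑ j, walshCoeff f (unitVector j) ^ 2) :=
        Real.sum_mul_le_sqrt_mul_sqrt _ _ _
    _ ≤ √d * 1 := by
        gcongr
        · simp
        · exact Real.sqrt_le_one.mpr hsq
    _ = √d := mul_one _

end BooleanCube

open BooleanCube

theorem stmt14_general (d : ℕ)
    (f : (Fin d → Bool) → ℝ)
    (hval : ∀ x, f x = 1 ∨ f x = -1)
    (hmono : ∀ x z : Fin d → Bool, (∀ j, x j ≤ z j) → f x ≤ f z)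
    (k : ℕ) :
    ∑ α ∈ Finset.univ.filter
        (fun α : Fin d → Bool => k < (Finset.univ.filter fun j => α j = true).card),
      ((∑ x : Fin d → Bool, chi d α x * f x) / 2 ^ d) ^ 2
      ≤ Real.sqrt d / (k + 1) := by
  have hf : Monotone f := fun x z => hmono x z
  calc ∑ α ∈ _, walshCoeff f α ^ 2
      ≤ (∑ α, ((Finset.univ.filter fun j => α j = true).card : ℝ) * walshCoeff f α ^ 2) /
          (k + 1) := sum_filter_lt_le_div _ _ (fun α => sq_nonneg _) k
    _ = (∑ j, walshCoeff f (unitVector j)) / (k + 1) := by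
        simp_rw [sum_card_mul_walshCoeff_sq_eq_sum_influence,
          influence_eq_walshCoeff_unitVector_of_monotone hval hf]
    _ ≤ √d / (k + 1) := by
        gcongr
        exact sum_walshCoeff_unitVector_le_sqrt hval

theorem stmt14 (d : ℕ) (hd : 1 ≤ d)
    (f : (Fin d → Bool) → ℝ)
    (hval : ∀ x, f x = 1 ∨ f x = -1)
    (hmono : ∀ x z : Fin d → Bool, (∀ j, x j ≤ z j) → f x ≤ f z)
    (k : ℕ) :
    ∑ α ∈ Finset.univ.filter
        (fun α : Fin d → Bool => k < (Finset.univ.filter fun j => α j = true).card),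
      ((∑ x : Fin d → Bool, chi d α x * f x) / 2 ^ d) ^ 2
      ≤ Real.sqrt d / (k + 1) :=
  stmt14_general d f hval hmono k
end
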